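/- arXiv:math/9801100 — 5 statements merged into one kernel-verified Lean document; each statement's English description precedes it below -/
import Mathlib

section
/- Let G be a group with a filtration G = G^1 ⊇ G^2 ⊇ ⋯ satisfying [G^i, G^j] ⊆ G^{i+j}. Then the associated graded Lie ring Gr• G = ⊕_{i≥1} G^i/G^{i+1} is generated in degree 1 (i.e., by Gr^1 G = G/G^2) if and only if G^r = G^{r+1}·Γ^r G for every r ≥ 1, where Γ^• G is the lower central series of G. -/
/-!
Modulo `G^{r+2}`, generation in degree 1 says that `G^{r+1}` is generated by `[G, G^r]`, and the
other condition says that it is generated by `Γ^{r+1} = [G, Γ^r]`; since `Γ^r ⊆ G^r`, the second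
implies the first. Conversely, by induction on `r`, `G^r = G^{r+1}·Γ^r` gives
`[G, G^r] ⊆ [G, G^{r+1}]·[G, Γ^r] ⊆ G^{r+2}·Γ^{r+1}`: the commutator with a product splits as
`[g, kn] = [g, k]·k[g, n]k⁻¹` because `Γ^r` is normal.
-/

open Pointwise
open scoped commutatorElement

namespace Subgroup

variable {G : Type*} [Group G]

theorem coe_eq_coe_mul_coe_iff (H K N : Subgroup G) [N.Normal] :
    (H : Set G) = (K : Set G) * (N : Set G) ↔ H = K ⊔ N := by
  rw [← mul_normal, SetLike.coe_set_eq]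

theorem commutator_sup_le (A K N : Subgroup G) [A.Normal] [N.Normal] :
    ⁅A, K ⊔ N⁆ ≤ ⁅A, K⁆ ⊔ ⁅A, N⁆ := by
  rw [commutator_le]
  intro g hg x hx
  obtain ⟨k, hk, n, hn, rfl⟩ : x ∈ (K : Set G) * (N : Set G) := by
    rw [← mul_normal]; exact hx
  have hexpand : ⁅g, k * n⁆ = ⁅g, k⁆ * (k * ⁅g, n⁆ * k⁻¹) := by group
  rw [hexpand]
  exact mul_mem (mem_sup_left (commutator_mem_commutator hg hk))
    (mem_sup_right ((commutator_normal A N).conj_mem _ (commutator_mem_commutator hg hn) k))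

end Subgroup

section Filtration

open Subgroup (commutator_mono commutator_comm commutator_sup_le)

variable {G : Type*} [Group G] {Gf : ℕ → Subgroup G}

theorem filtration_commutator_one_le
    (hcent : ∀ i j : ℕ, 1 ≤ i → 1 ≤ j → ⁅Gf i, Gf j⁆ ≤ Gf (i + j)) {r : ℕ} (hr : 1 ≤ r) :
    ⁅Gf 1, Gf r⁆ ≤ Gf (r + 1) := by
  simpa [Nat.add_comm] using hcent 1 r le_rfl hr

theorem lowerCentralSeries_le_filtration (h1 : Gf 1 = ⊤)
    (hcent : ∀ i j : ℕ, 1 ≤ i → 1 ≤ j → ⁅Gf i, Gf j⁆ ≤ Gf (i + j)) (n : ℕ) :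
    (⊤ : Subgroup G).lowerCentralSeries n ≤ Gf (n + 1) := by
  induction n with
  | zero => simp [h1]
  | succ n ih =>
    calc (⊤ : Subgroup G).lowerCentralSeries (n + 1)
        ≤ ⁅Gf (n + 1), Gf 1⁆ := commutator_mono ih h1.ge
      _ ≤ Gf (n + 2) :=
        (commutator_comm _ _).trans_le (filtration_commutator_one_le hcent (by omega))

theorem filtration_eq_sup_lowerCentralSeries (h1 : Gf 1 = ⊤)
    (hdesc : ∀ r : ℕ, 1 ≤ r → Gf (r + 1) ≤ Gf r)
    (hcent : ∀ i j : ℕ, 1 ≤ i → 1 ≤ j → ⁅Gf i, Gf j⁆ ≤ Gf (i + j))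
    (hgen : ∀ r : ℕ, 1 ≤ r → Gf (r + 1) = Gf (r + 2) ⊔ ⁅Gf 1, Gf r⁆) (n : ℕ) :
    Gf (n + 1) = Gf (n + 2) ⊔ (⊤ : Subgroup G).lowerCentralSeries n := by
  induction n with
  | zero => simp [h1]
  | succ n ih =>
    refine le_antisymm ?_
      (sup_le (hdesc _ (by omega)) (lowerCentralSeries_le_filtration h1 hcent _))
    have hbracket :
        ⁅Gf 1, Gf (n + 1)⁆ ≤ Gf (n + 3) ⊔ (⊤ : Subgroup G).lowerCentralSeries (n + 1) := by
      rw [ih, h1]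
      calc ⁅⊤, Gf (n + 2) ⊔ (⊤ : Subgroup G).lowerCentralSeries n⁆
          ≤ ⁅⊤, Gf (n + 2)⁆ ⊔ ⁅⊤, (⊤ : Subgroup G).lowerCentralSeries n⁆ :=
            commutator_sup_le _ _ _
        _ ≤ _ := sup_le_sup (h1 ▸ filtration_commutator_one_le hcent (by omega))
          (commutator_comm _ _).le
    rw [hgen (n + 1) (by omega)]
    exact sup_le le_sup_left hbracket

theorem filtration_eq_sup_commutator (h1 : Gf 1 = ⊤)
    (hdesc : ∀ r : ℕ, 1 ≤ r → Gf (r + 1) ≤ Gf r)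
    (hcent : ∀ i j : ℕ, 1 ≤ i → 1 ≤ j → ⁅Gf i, Gf j⁆ ≤ Gf (i + j))
    (hlcs : ∀ n : ℕ, Gf (n + 1) = Gf (n + 2) ⊔ (⊤ : Subgroup G).lowerCentralSeries n)
    (n : ℕ) : Gf (n + 2) = Gf (n + 3) ⊔ ⁅Gf 1, Gf (n + 1)⁆ := by
  refine le_antisymm ?_
    (sup_le (hdesc _ (by omega)) (filtration_commutator_one_le hcent (by omega)))
  calc Gf (n + 2)
      = Gf (n + 3) ⊔ ⁅(⊤ : Subgroup G).lowerCentralSeries n, ⊤⁆ := hlcs (n + 1)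
    _ ≤ Gf (n + 3) ⊔ ⁅Gf 1, Gf (n + 1)⁆ := sup_le_sup_left
      ((commutator_mono (lowerCentralSeries_le_filtration h1 hcent n) h1.ge).trans_eq
        (commutator_comm _ _)) _

end Filtration

/-- Bousfield's generation criterion (Lemma 2.3 of the paper): for a central-series
filtration `G = G^1 ⊇ G^2 ⊇ ⋯` with `[G^i,G^j] ⊆ G^{i+j}`, the associated graded Lie
ring `⊕ G^i/G^{i+1}` is generated by `Gr¹ G = G/G²` — i.e. each `Gr^{r+1}` is the span
of brackets of `Gr¹` with `Gr^r`, which in group terms says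
`G^{r+1} = G^{r+2}·[G¹,G^r]` — if and only if `G^r = G^{r+1}·Γ^r G` for every `r ≥ 1`,
where `Γ^• G` is the lower central series (`Γ^r G = lowerCentralSeries G (r-1)`). -/
theorem stmt5 {G : Type*} [Group G] (Gf : ℕ → Subgroup G)
    (h1 : Gf 1 = ⊤)
    (hdesc : ∀ r : ℕ, 1 ≤ r → Gf (r + 1) ≤ Gf r)
    (hcent : ∀ i j : ℕ, 1 ≤ i → 1 ≤ j → ⁅Gf i, Gf j⁆ ≤ Gf (i + j)) :
    (∀ r : ℕ, 1 ≤ r → Gf (r + 1) = Gf (r + 2) ⊔ ⁅Gf 1, Gf r⁆) ↔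
    (∀ r : ℕ, 1 ≤ r →
      (Gf r : Set G) = (Gf (r + 1) : Set G) * (Subgroup.lowerCentralSeries (⊤ : Subgroup G) (r - 1) : Set G)) := by
  have hrhs : (∀ r : ℕ, 1 ≤ r → (Gf r : Set G) =
        (Gf (r + 1) : Set G) * (Subgroup.lowerCentralSeries (⊤ : Subgroup G) (r - 1) : Set G)) ↔
      ∀ n : ℕ, Gf (n + 1) = Gf (n + 2) ⊔ Subgroup.lowerCentralSeries (⊤ : Subgroup G) n := by
    simp only [Subgroup.coe_eq_coe_mul_coe_iff]
    refine ⟨fun h n => h (n + 1) (by omega), fun h r hr => ?_⟩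
    obtain ⟨n, rfl⟩ := Nat.exists_eq_add_of_le' hr
    exact h n
  rw [hrhs]
  refine ⟨filtration_eq_sup_lowerCentralSeries h1 hdesc hcent, fun hlcs r hr => ?_⟩
  obtain ⟨n, rfl⟩ := Nat.exists_eq_add_of_le' hr
  exact filtration_eq_sup_commutator h1 hdesc hcent hlcs n
end

section
/- For Y ∈ SL_n(ℤ[t,t⁻¹]) with Y ≡ I mod (t−1)^i, write Y = I + (t−1)^i Y_i mod (t−1)^{i+1} with Y_i an integer matrix. This is well-defined (using (t⁻¹−1)^i ≡ (−1)^i (t−1)^i mod (t−1)^{i+1}), Y_i has trace 0, and the resulting map σ_i from the i-th congruence subgroup to sl_n(ℤ) is a surjective group homomorphism with kernel the (i+1)-st congruence subgroup. -/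
/-!
Write `π = t - 1`. Reduction modulo `π` is evaluation at `t = 1`, so `π ∣ f - C c ↔ f(1) = c`, and
every `Y ∈ K^i` is `1 + π^i N` for a Laurent matrix `N`, with `σ_i(Y) = N(1)`. Well-definedness and
the kernel are then immediate, and `(1 + π^i N)(1 + π^i N') = 1 + π^i (N + N' + π^i N N')` gives
the homomorphism property. The trace vanishes because `det (1 + π^i N) = 1 + π^i tr N + π^{2i}(…)`.
For surjectivity, `det (1 + π^i u vᵀ) = 1 + π^i (v ⬝ u)`, and trace-zero matrices are sums of
rank-one matrices `u vᵀ` with `v ⬝ u = 0`: the `E_pq` with `p ≠ q` and `(e_p - e_q)(e_p + e_q)ᵀ`.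
-/

open LaurentPolynomial

abbrev SLL (n : ℕ) := Matrix.SpecialLinearGroup (Fin n) (LaurentPolynomial ℤ)

noncomputable def tL : LaurentPolynomial ℤ := LaurentPolynomial.T (1 : ℤ)

/-- The congruence subgroup `K^i = {Y : Y ≡ I mod (t-1)^i}` of `SL_n(ℤ[t,t⁻¹])`,
as a set (for `i ≥ 1` it lies in the kernel of evaluation at `t = 1`). -/
def KLau (n i : ℕ) : Set (SLL n) :=
  {Y | ∀ a b : Fin n, (tL - 1) ^ i ∣
    (Y.val a b - (1 : Matrix (Fin n) (Fin n) (LaurentPolynomial ℤ)) a b)}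

/-- `Y ≡ I + (t-1)^i · A mod (t-1)^{i+1}` with `A` an integer matrix. -/
def sigmaRel (n i : ℕ) (Y : SLL n) (A : Matrix (Fin n) (Fin n) ℤ) : Prop :=
  ∀ a b : Fin n, (tL - 1) ^ (i + 1) ∣
    (Y.val a b - (1 : Matrix (Fin n) (Fin n) (LaurentPolynomial ℤ)) a b -
      (tL - 1) ^ i * LaurentPolynomial.C (A a b))

open Matrix

namespace LaurentPolynomial

variable {R : Type*} [CommRing R]

noncomputable def evalOne : R[T;T⁻¹] →+* R := eval₂ (RingHom.id R) 1

@[simp] lemma evalOne_C (r : R) : evalOne (C r) = r := eval₂_C _ _ r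

@[simp] lemma evalOne_T (m : ℤ) : evalOne (T m : R[T;T⁻¹]) = 1 := by simp [evalOne]

lemma T_one_sub_one_ne_zero [Nontrivial R] : (T 1 - 1 : R[T;T⁻¹]) ≠ 0 := by
  rw [sub_ne_zero, ← T_zero]
  intro h
  have h' := congrArg degree h
  rw [degree_T, degree_T] at h'
  exact one_ne_zero (WithBot.coe_inj.mp h')

lemma T_one_sub_one_dvd_T_sub_one (m : ℤ) : (T 1 - 1 : R[T;T⁻¹]) ∣ T m - 1 := by
  induction m using Int.induction_on with
  | zero => simp
  | succ k ih =>
    have h : (T (k + 1) - 1 : R[T;T⁻¹]) = T k * (T 1 - 1) + (T k - 1) := by rw [T_add]; ring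
    rw [h]
    exact dvd_add (dvd_mul_left _ _) ih
  | pred k ih =>
    have h : (T (-k - 1) - 1 : R[T;T⁻¹]) = (T (-k) - 1) - T (-k - 1) * (T 1 - 1) := by
      rw [mul_sub, ← T_add]; ring_nf
    rw [h]
    exact dvd_sub ih (dvd_mul_left _ _)

lemma T_one_sub_one_dvd_sub_C_evalOne (f : R[T;T⁻¹]) : (T 1 - 1) ∣ f - C (evalOne f) := by
  induction f using LaurentPolynomial.induction_on' with
  | add p q hp hq => simpa [add_sub_add_comm] using dvd_add hp hq
  | C_mul_T m a =>
    rw [map_mul, evalOne_C, evalOne_T, mul_one, ← mul_sub_one]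
    exact dvd_mul_of_dvd_right (T_one_sub_one_dvd_T_sub_one m) _

lemma T_one_sub_one_dvd_sub_C_iff (f : R[T;T⁻¹]) (r : R) :
    (T 1 - 1) ∣ f - C r ↔ evalOne f = r := by
  refine ⟨fun ⟨g, hg⟩ => ?_, fun h => h ▸ T_one_sub_one_dvd_sub_C_evalOne f⟩
  simpa [sub_eq_zero] using congrArg evalOne hg

lemma T_one_sub_one_dvd_iff (f : R[T;T⁻¹]) : (T 1 - 1) ∣ f ↔ evalOne f = 0 := by
  simpa using T_one_sub_one_dvd_sub_C_iff f 0

end LaurentPolynomial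

lemma pow_succ_dvd_pow_mul_iff {M : Type*} [MonoidWithZero M] [IsCancelMulZero M] {x : M}
    (hx : x ≠ 0) (i : ℕ) (g : M) : x ^ (i + 1) ∣ x ^ i * g ↔ x ∣ g := by
  rw [pow_succ, mul_dvd_mul_iff_left (pow_ne_zero i hx)]

namespace Matrix

variable {ι R : Type*} [Fintype ι] [DecidableEq ι] [CommRing R]

lemma one_add_smul_mul_one_add_smul (x : R) (N N' : Matrix ι ι R) :
    (1 + x • N) * (1 + x • N') = 1 + x • (N + N' + x • (N * N')) := by
  simp only [add_mul, mul_add, mul_one, one_mul, Matrix.smul_mul, Matrix.mul_smul, smul_add,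
    smul_smul]
  abel

lemma dvd_trace_of_det_one_add_smul_eq_one [IsDomain R] {x : R} (hx : x ≠ 0) {N : Matrix ι ι R}
    (h : det (1 + x • N) = 1) : x ∣ trace N := by
  rw [det_one_add_smul] at h
  generalize Polynomial.eval (R := R) _ _ = P at h
  exact ⟨-P, mul_left_cancel₀ hx (by linear_combination h)⟩

lemma det_one_add_smul_vecMulVec (x : R) {u v : ι → R} (h : v ⬝ᵥ u = 0) :
    det (1 + x • vecMulVec u v) = 1 := by
  rw [← smul_vecMulVec, vecMulVec_eq Unit, det_one_add_replicateCol_mul_replicateRow,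
    dotProduct_smul, h, smul_zero, add_zero]

lemma single_mem_closure_vecMulVec {p q : ι} (hpq : p ≠ q) (c : R) :
    single p q c ∈ AddSubmonoid.closure {M | ∃ u v : ι → R, v ⬝ᵥ u = 0 ∧ vecMulVec u v = M} := by
  refine AddSubmonoid.subset_closure ⟨Pi.single p c, Pi.single q 1, ?_, ?_⟩
  · simp [hpq]
  · ext a b
    simp only [vecMulVec_apply, single_apply, Pi.single_apply]
    grind

lemma single_sub_single_mem_closure_vecMulVec (p q : ι) (c : R) :
    single p p c - single q q c ∈
      AddSubmonoid.closure {M | ∃ u v : ι → R, v ⬝ᵥ u = 0 ∧ vecMulVec u v = M} := by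
  obtain rfl | hpq := eq_or_ne p q
  · rw [sub_self]
    exact zero_mem _
  have h : single p p c - single q q c =
      vecMulVec (Pi.single p c - Pi.single q c) (Pi.single p 1 + Pi.single q 1) +
        single p q (-c) + single q p c := by
    ext a b
    simp only [vecMulVec_apply, add_apply, sub_apply, single_apply, Pi.add_apply, Pi.sub_apply,
      Pi.single_apply]
    grind
  rw [h]
  refine add_mem (add_mem (AddSubmonoid.subset_closure ⟨_, _, ?_, rfl⟩)
    (single_mem_closure_vecMulVec hpq _)) (single_mem_closure_vecMulVec hpq.symm _)
  simp [hpq, hpq.symm]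

lemma mem_closure_vecMulVec_of_trace_eq_zero {A : Matrix ι ι R} (hA : trace A = 0) :
    A ∈ AddSubmonoid.closure {M | ∃ u v : ι → R, v ⬝ᵥ u = 0 ∧ vecMulVec u v = M} := by
  rcases isEmpty_or_nonempty ι with _ | ⟨⟨o⟩⟩
  · exact Subsingleton.elim 0 A ▸ zero_mem _
  -- the correction terms `single o o (A p p)` add up to `single o o (trace A) = 0`
  have hA' : A = ∑ p, ∑ q, (single p q (A p q) - if p = q then single o o (A p p) else 0) := by
    simp only [Finset.sum_sub_distrib, Finset.sum_ite_eq, Finset.mem_univ, if_true]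
    have h0 : ∑ p, single o o (A p p) = 0 := by
      have h := map_sum (singleAddMonoidHom (α := R) o o) (fun p => A p p) Finset.univ
      simp only [singleAddMonoidHom_apply] at h
      rw [← h]
      exact (congrArg (single o o) hA).trans (single_zero o o)
    rw [h0, sub_zero, ← matrix_eq_sum_single]
  rw [hA']
  refine sum_mem fun p _ => sum_mem fun q _ => ?_
  obtain rfl | hpq := eq_or_ne p q
  · simpa using single_sub_single_mem_closure_vecMulVec p o (A p p)
  · simpa [hpq] using single_mem_closure_vecMulVec hpq (A p q)

end Matrix

section CongruenceSubgroup

variable {n i : ℕ}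

lemma tL_sub_one_ne_zero : tL - 1 ≠ 0 := T_one_sub_one_ne_zero

lemma tL_sub_one_dvd_sub_C_iff (f : ℤ[T;T⁻¹]) (c : ℤ) : tL - 1 ∣ f - C c ↔ evalOne f = c :=
  T_one_sub_one_dvd_sub_C_iff f c

lemma mem_KLau_iff {Y : SLL n} : Y ∈ KLau n i ↔ ∃ N, Y.val = 1 + (tL - 1) ^ i • N := by
  refine ⟨fun hY => ?_, fun ⟨N, hN⟩ a b => ?_⟩
  · choose N hN using hY
    exact ⟨of N, ext fun a b => by simp [← hN]⟩
  · simp [hN]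

lemma sigmaRel_iff {Y : SLL n} {N : Matrix (Fin n) (Fin n) ℤ[T;T⁻¹]}
    (hY : Y.val = 1 + (tL - 1) ^ i • N) {A : Matrix (Fin n) (Fin n) ℤ} :
    sigmaRel n i Y A ↔ N.map evalOne = A := by
  simp only [sigmaRel, hY, Matrix.add_apply, Matrix.smul_apply, smul_eq_mul, add_sub_cancel_left,
    ← mul_sub, pow_succ_dvd_pow_mul_iff tL_sub_one_ne_zero, tL_sub_one_dvd_sub_C_iff, ← ext_iff,
    map_apply]

lemma mem_KLau_succ_iff {Y : SLL n} : Y ∈ KLau n (i + 1) ↔ sigmaRel n i Y 0 := by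
  simp [KLau, sigmaRel]

lemma existsUnique_sigmaRel {Y : SLL n} (hY : Y ∈ KLau n i) : ∃! A, sigmaRel n i Y A := by
  obtain ⟨N, hN⟩ := mem_KLau_iff.1 hY
  simp only [sigmaRel_iff hN]
  exact existsUnique_eq'

lemma one_mem_KLau : (1 : SLL n) ∈ KLau n i := by
  simp [KLau]

lemma sigmaRel_one : sigmaRel n i 1 0 := by
  simp [sigmaRel]

lemma coe_mul_eq_one_add_smul {Y Z : SLL n} {N N' : Matrix (Fin n) (Fin n) ℤ[T;T⁻¹]}
    (hN : Y.val = 1 + (tL - 1) ^ i • N) (hN' : Z.val = 1 + (tL - 1) ^ i • N') :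
    (Y * Z).val = 1 + (tL - 1) ^ i • (N + N' + (tL - 1) ^ i • (N * N')) := by
  rw [show (Y * Z).val = Y.val * Z.val from rfl, hN, hN', one_add_smul_mul_one_add_smul]

lemma mul_mem_KLau {Y Z : SLL n} (hY : Y ∈ KLau n i) (hZ : Z ∈ KLau n i) : Y * Z ∈ KLau n i := by
  obtain ⟨N, hN⟩ := mem_KLau_iff.1 hY
  obtain ⟨N', hN'⟩ := mem_KLau_iff.1 hZ
  exact mem_KLau_iff.2 ⟨_, coe_mul_eq_one_add_smul hN hN'⟩

lemma sigmaRel_mul (hi : 1 ≤ i) {Y Z : SLL n} (hY : Y ∈ KLau n i) (hZ : Z ∈ KLau n i)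
    {A B : Matrix (Fin n) (Fin n) ℤ} (hA : sigmaRel n i Y A) (hB : sigmaRel n i Z B) :
    sigmaRel n i (Y * Z) (A + B) := by
  obtain ⟨N, hN⟩ := mem_KLau_iff.1 hY
  obtain ⟨N', hN'⟩ := mem_KLau_iff.1 hZ
  rw [sigmaRel_iff (coe_mul_eq_one_add_smul hN hN'), ← (sigmaRel_iff hN).1 hA,
    ← (sigmaRel_iff hN').1 hB]
  ext a b
  simp [tL, zero_pow (by omega : i ≠ 0)]

lemma trace_eq_zero_of_sigmaRel (hi : 1 ≤ i) {Y : SLL n} (hY : Y ∈ KLau n i)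
    {A : Matrix (Fin n) (Fin n) ℤ} (hA : sigmaRel n i Y A) : trace A = 0 := by
  obtain ⟨N, hN⟩ := mem_KLau_iff.1 hY
  have hdvd : tL - 1 ∣ trace N :=
    (dvd_pow_self _ (by omega)).trans <| dvd_trace_of_det_one_add_smul_eq_one
      (pow_ne_zero i tL_sub_one_ne_zero) (hN ▸ Y.2)
  rw [← (sigmaRel_iff hN).1 hA, ← AddMonoidHom.map_trace]
  exact (T_one_sub_one_dvd_iff _).1 hdvd

lemma exists_sigmaRel_vecMulVec (u v : Fin n → ℤ) (h : v ⬝ᵥ u = 0) :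
    ∃ Y ∈ KLau n i, sigmaRel n i Y (vecMulVec u v) := by
  have hdet : det (1 + (tL - 1) ^ i • vecMulVec (C ∘ u) (C ∘ v)) = 1 :=
    det_one_add_smul_vecMulVec _ (by rw [← RingHom.map_dotProduct, h, map_zero])
  have hY : (⟨_, hdet⟩ : SLL n).val = 1 + (tL - 1) ^ i • vecMulVec (C ∘ u) (C ∘ v) := rfl
  refine ⟨_, mem_KLau_iff.2 ⟨_, hY⟩, (sigmaRel_iff hY).2 ?_⟩
  ext a b
  simp [vecMulVec_apply]

lemma exists_sigmaRel_of_trace_eq_zero (hi : 1 ≤ i) {A : Matrix (Fin n) (Fin n) ℤ}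
    (hA : trace A = 0) : ∃ Y ∈ KLau n i, sigmaRel n i Y A := by
  let image : AddSubmonoid (Matrix (Fin n) (Fin n) ℤ) :=
    { carrier := {A | ∃ Y ∈ KLau n i, sigmaRel n i Y A}
      zero_mem' := ⟨1, one_mem_KLau, sigmaRel_one⟩
      add_mem' := fun ⟨Y, hY, hA⟩ ⟨Z, hZ, hB⟩ =>
        ⟨Y * Z, mul_mem_KLau hY hZ, sigmaRel_mul hi hY hZ hA hB⟩ }
  refine (AddSubmonoid.closure_le (S := image).2 ?_) (mem_closure_vecMulVec_of_trace_eq_zero hA)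
  rintro _ ⟨u, v, h, rfl⟩
  exact exists_sigmaRel_vecMulVec u v h

lemma tL_sub_one_pow_succ_dvd_T_neg_one_sub_one_pow_sub (i : ℕ) :
    (tL - 1) ^ (i + 1) ∣ (T (-1) - 1) ^ i - (-1 : ℤ[T;T⁻¹]) ^ i * (tL - 1) ^ i := by
  have h : (T (-1) - 1 : ℤ[T;T⁻¹]) = -T (-1) * (tL - 1) := by
    rw [tL, neg_mul, mul_sub, ← T_add]
    simp
  rw [h, mul_pow, ← sub_mul, mul_comm, pow_succ_dvd_pow_mul_iff tL_sub_one_ne_zero, tL,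
    T_one_sub_one_dvd_iff]
  simp

end CongruenceSubgroup

/-- For `Y ∈ K^i ⊆ SL_n(ℤ[t,t⁻¹])` one can write `Y ≡ I + (t-1)^i Y_i mod (t-1)^{i+1}`
with `Y_i` a well-defined trace-zero integer matrix (using
`(t⁻¹-1)^i ≡ (-1)^i (t-1)^i mod (t-1)^{i+1}`), and `σ_i : Y ↦ Y_i` is a surjective
group homomorphism `K^i → sl_n(ℤ)` with kernel `K^{i+1}`. -/
theorem stmt9 (n i : ℕ) (hi : 1 ≤ i) :
    ((tL - 1) ^ (i + 1) ∣
      ((LaurentPolynomial.T (-1 : ℤ) - 1) ^ i - (-1 : LaurentPolynomial ℤ) ^ i * (tL - 1) ^ i)) ∧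
    (∀ Y ∈ KLau n i, ∃! A : Matrix (Fin n) (Fin n) ℤ, sigmaRel n i Y A) ∧
    (∀ Y ∈ KLau n i, ∀ A, sigmaRel n i Y A → Matrix.trace A = 0) ∧
    (∀ Y ∈ KLau n i, ∀ Z ∈ KLau n i, ∀ A B,
      sigmaRel n i Y A → sigmaRel n i Z B → sigmaRel n i (Y * Z) (A + B)) ∧
    (∀ A : Matrix (Fin n) (Fin n) ℤ, Matrix.trace A = 0 →
      ∃ Y ∈ KLau n i, sigmaRel n i Y A) ∧
    (∀ Y ∈ KLau n i, ∀ A, sigmaRel n i Y A → (A = 0 ↔ Y ∈ KLau n (i + 1))) :=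
  ⟨tL_sub_one_pow_succ_dvd_T_neg_one_sub_one_pow_sub i,
    fun _ hY => existsUnique_sigmaRel hY,
    fun _ hY _ hA => trace_eq_zero_of_sigmaRel hi hY hA,
    fun _ hY _ hZ _ _ hA hB => sigmaRel_mul hi hY hZ hA hB,
    fun _ hA => exists_sigmaRel_of_trace_eq_zero hi hA,
    fun _ hY _ hA => by
      rw [mem_KLau_succ_iff]
      exact ⟨fun h => h ▸ hA, (existsUnique_sigmaRel hY).unique hA⟩⟩
end

section
/- Let 𝒰 = ker(SL_n(ℚ[[T]]) → SL_n(ℚ)) with T-adic filtration 𝒰^r, and let K = ker(SL_n(ℤ[t]) → SL_n(ℤ)) included in 𝒰 via t ↦ T. For every X ∈ 𝒰/𝒰^r there exists a nonzero integer m such that X^m lies in the image of K/K^r → 𝒰/𝒰^r. -/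
abbrev SLZt (n : ℕ) := Matrix.SpecialLinearGroup (Fin n) (Polynomial ℤ)
abbrev SLQ (n : ℕ) := Matrix.SpecialLinearGroup (Fin n) (PowerSeries ℚ)

/-- `𝒰 = ker(SL_n(ℚ[[T]]) → SL_n(ℚ))`. -/
noncomputable def UU (n : ℕ) : Subgroup (SLQ n) :=
  (Matrix.SpecialLinearGroup.map (PowerSeries.constantCoeff : PowerSeries ℚ →+* ℚ)).ker

/-- `𝒰^r`, the kernel of reduction mod `T^r`. -/
noncomputable def Ur (n r : ℕ) : Subgroup (SLQ n) :=
  (Matrix.SpecialLinearGroup.map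
    (Ideal.Quotient.mk (Ideal.span {(PowerSeries.X : PowerSeries ℚ) ^ r}))).ker

/-- `K = ker(SL_n(ℤ[t]) → SL_n(ℤ))`. -/
noncomputable def Kker (n : ℕ) : Subgroup (SLZt n) :=
  (Matrix.SpecialLinearGroup.map (Polynomial.evalRingHom (0 : ℤ))).ker

/-- The inclusion `SL_n(ℤ[t]) → SL_n(ℚ[[T]])`, `t ↦ T`. -/
noncomputable def incl (n : ℕ) : SLZt n →* SLQ n :=
  Matrix.SpecialLinearGroup.map
    (Polynomial.eval₂RingHom (Int.castRingHom (PowerSeries ℚ)) PowerSeries.X)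

/-!
Induction on `r`, starting from `𝒰 = 𝒰^1`. Suppose `Z := X ^ m * (incl Y)⁻¹` lies in `𝒰^r`,
`r ≥ 1`. Modulo `T^(r+1)`, where `ε = T^r` squares to zero, `Z ≡ 1 + ε A` with `A` a rational
matrix, and `det Z = 1` forces `tr A = 0`. Clearing denominators, `d A = B` is an integral
trace-zero matrix, hence a sum of square-zero integral matrices `N`; each `1 + t^r N` lies in `K`
(its determinant is a unit of `ℤ[t]` with constant term `1`), so their product `Y'` satisfies
`Z^d ≡ incl Y'`. As `1 + ε A` commutes with everything in `𝒰` modulo `T^(r+1)`,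
`X^(m d) = (Z · incl Y)^d ≡ incl (Y' Y^d)`.
-/

open Matrix PowerSeries

namespace Matrix

section SquareZero

variable {ι S : Type*} [Fintype ι] [DecidableEq ι] [CommRing S] {ε : S}

theorem one_add_smul_mul_one_add_smul_s12 (hε : ε * ε = 0) (M N : Matrix ι ι S) :
    (1 + ε • M) * (1 + ε • N) = 1 + ε • (M + N) := by
  have h : (ε • M) * (ε • N) = 0 := by
    rw [Matrix.smul_mul, Matrix.mul_smul, smul_smul, hε, zero_smul]
  rw [mul_add, add_mul, add_mul, h, smul_add]
  simp only [one_mul, mul_one, add_zero]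
  abel

theorem one_add_smul_pow (hε : ε * ε = 0) (M : Matrix ι ι S) :
    ∀ k : ℕ, (1 + ε • M) ^ k = 1 + ε • (k • M)
  | 0 => by simp
  | k + 1 => by
    rw [pow_succ, one_add_smul_pow hε M k, one_add_smul_mul_one_add_smul_s12 hε, succ_nsmul]

theorem det_one_add_smul_of_mul_self_eq_zero (hε : ε * ε = 0) (M : Matrix ι ι S) :
    det (1 + ε • M) = 1 + trace M * ε := by
  rw [det_one_add_smul, sq, hε, mul_zero, add_zero]

theorem commute_one_add_smul {W : Matrix ι ι S} (hW : ε • (W - 1) = 0) (M : Matrix ι ι S) :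
    Commute W (1 + ε • M) := by
  have hl : W * (ε • M) = ε • M := by
    rw [← sub_eq_zero, ← sub_one_mul, Matrix.mul_smul, ← Matrix.smul_mul, hW, zero_mul]
  have hr : (ε • M) * W = ε • M := by
    rw [← sub_eq_zero, ← mul_sub_one, Matrix.smul_mul, ← Matrix.mul_smul, hW, mul_zero]
  exact (Commute.one_right W).add_right (hl.trans hr.symm)

end SquareZero

section TraceZero

variable {ι R : Type*} [Fintype ι] [DecidableEq ι] [Ring R]

theorem single_mul_self_of_ne {i j : ι} (h : i ≠ j) (b : R) :
    single i j b * single i j b = 0 := by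
  rw [single_mul_single_of_ne _ _ _ _ h.symm]

theorem single_sub_single_mem_closure_mul_self_eq_zero (i o : ι) (b : R) :
    single i i b - single o o b ∈ AddSubmonoid.closure {N : Matrix ι ι R | N * N = 0} := by
  rcases eq_or_ne i o with rfl | h
  · rw [sub_self]
    exact zero_mem _
  -- `D = (eᵢ - eₒ) (eᵢ + eₒ)ᵀ b` squares to zero since `(eᵢ + eₒ)ᵀ (eᵢ - eₒ) = 0`
  set D := single i i b + single i o b - single o i b - single o o b with hD_def
  have hD : D * D = 0 := by
    simp only [hD_def, add_mul, mul_add, sub_mul, mul_sub, single_mul_single_same,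
      single_mul_single_of_ne _ _ _ _ h, single_mul_single_of_ne _ _ _ _ h.symm]
    abel
  have hsplit : single i i b - single o o b = D + single o i b + single i o (-b) := by
    rw [hD_def, ← single_neg]
    abel
  rw [hsplit]
  exact add_mem (add_mem (AddSubmonoid.subset_closure hD)
    (AddSubmonoid.subset_closure (single_mul_self_of_ne h.symm b)))
    (AddSubmonoid.subset_closure (single_mul_self_of_ne h (-b)))

theorem mem_closure_mul_self_eq_zero_of_trace_eq_zero {B : Matrix ι ι R} (hB : B.trace = 0) :
    B ∈ AddSubmonoid.closure {N : Matrix ι ι R | N * N = 0} := by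
  rcases isEmpty_or_nonempty ι with hι | ⟨⟨o⟩⟩
  · rw [Subsingleton.elim B 0]
    exact zero_mem _
  have h_tr : ∑ i, single o o (B i i) = 0 := by
    have := map_sum (singleAddMonoidHom (α := R) o o) (fun i => B i i) Finset.univ
    simp only [singleAddMonoidHom_apply] at this
    rw [← this]
    exact (congrArg _ hB).trans (single_zero o o)
  have hsum : B = ∑ i, ∑ j, (single i j (B i j) - if i = j then single o o (B i i) else 0) := by
    simp only [Finset.sum_sub_distrib, Finset.sum_ite_eq, Finset.mem_univ, if_true,
      ← matrix_eq_sum_single, h_tr, sub_zero]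
  rw [hsum]
  refine sum_mem fun i _ => sum_mem fun j _ => ?_
  split_ifs with h
  · subst h
    exact single_sub_single_mem_closure_mul_self_eq_zero i o _
  · rw [sub_zero]
    exact AddSubmonoid.subset_closure (single_mul_self_of_ne h _)

end TraceZero

theorem exists_nat_smul_eq_map_intCast {ι : Type*} [Finite ι] (A : Matrix ι ι ℚ) :
    ∃ d : ℕ, d ≠ 0 ∧ ∃ B : Matrix ι ι ℤ, B.map (↑) = d • A := by
  obtain ⟨⟨b, hb⟩, h⟩ :=
    IsLocalization.exist_integer_multiples_of_finite (nonZeroDivisors ℤ)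
      fun p : ι × ι => A p.1 p.2
  choose z hz using h
  -- the common denominator `b` may be negative; `b * b` is a positive one
  refine ⟨b.natAbs * b.natAbs, by simpa using nonZeroDivisors.ne_zero hb,
    Matrix.of fun i j => b * z (i, j), ?_⟩
  ext i j
  have := hz (i, j)
  simp only [algebraMap_int_eq, eq_intCast, zsmul_eq_mul] at this
  simp [this, ← mul_assoc]

namespace SpecialLinearGroup

variable {ι R S : Type*} [Fintype ι] [DecidableEq ι] [CommRing R] [CommRing S]

theorem coe_map_sub_one (f : R →+* S) (g : SpecialLinearGroup ι R) :
    ((map f g : Matrix ι ι S) - 1) = ((g : Matrix ι ι R) - 1).map f := by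
  rw [map_apply_coe, ← map_one f.mapMatrix, ← map_sub]
  rfl

theorem mem_ker_map_iff (f : R →+* S) (g : SpecialLinearGroup ι R) :
    g ∈ (map f).ker ↔ ∀ i j, f (((g : Matrix ι ι R) - 1) i j) = 0 := by
  rw [MonoidHom.mem_ker, Matrix.SpecialLinearGroup.ext_iff]
  refine forall₂_congr fun i j => ?_
  rw [Matrix.sub_apply, map_sub, sub_eq_zero, map_apply_coe, Matrix.SpecialLinearGroup.coe_one,
    RingHom.mapMatrix_apply, map_apply, ← RingHom.map_one f.mapMatrix, RingHom.mapMatrix_apply,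
    map_apply]

end SpecialLinearGroup

end Matrix

theorem Polynomial.det_one_add_eq_one_of_mul_self_eq_zero {ι R : Type*} [Fintype ι]
    [DecidableEq ι] [CommRing R] [NoZeroDivisors R] {M : Matrix ι ι (Polynomial R)}
    (hM : M * M = 0) (h0 : M.map (Polynomial.eval 0) = 0) : det (1 + M) = 1 := by
  have hunit : IsUnit (det (1 + M)) := by
    refine IsUnit.of_mul_eq_one (det (1 - M)) ?_
    rw [← det_mul, mul_sub, mul_one, add_mul, one_mul, hM, add_zero, add_sub_cancel_right,
      det_one]
  obtain ⟨c, -, hc⟩ := Polynomial.isUnit_iff.1 hunit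
  have heval : (det (1 + M)).eval 0 = 1 := by
    rw [← Polynomial.coe_evalRingHom, RingHom.map_det, map_add, map_one, RingHom.mapMatrix_apply,
      Polynomial.coe_evalRingHom, h0, add_zero, det_one]
  rw [← hc, Polynomial.eval_C] at heval
  rw [← hc, heval, map_one]

namespace PowerSeries

variable {R : Type*} [CommRing R] {r : ℕ}

theorem X_pow_succ_dvd_sub_C_mul_X_pow {f : R⟦X⟧} (h : X ^ r ∣ f) :
    X ^ (r + 1) ∣ f - C (coeff r f) * X ^ r := by
  rw [X_pow_dvd_iff] at h ⊢
  intro m hm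
  rw [map_sub, coeff_C_mul_X_pow]
  rcases (Nat.lt_succ_iff.1 hm).lt_or_eq with hm | rfl
  · rw [h m hm, if_neg hm.ne, sub_zero]
  · rw [if_pos rfl, sub_self]

theorem eq_zero_of_X_pow_succ_dvd_C_mul_X_pow {c : R} (h : X ^ (r + 1) ∣ C c * X ^ r) :
    c = 0 := by
  simpa using X_pow_dvd_iff.1 h r r.lt_succ_self

theorem constantCoeff_eval₂_X (p : Polynomial ℤ) :
    constantCoeff (p.eval₂ (Int.castRingHom R⟦X⟧) X) = ((p.eval 0 : ℤ) : R) := by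
  rw [Polynomial.hom_eval₂, constantCoeff_X, Polynomial.eval₂_at_zero,
    Polynomial.coeff_zero_eq_eval_zero]
  simp

variable (R) in
abbrev TruncPowerSeries (s : ℕ) := R⟦X⟧ ⧸ Ideal.span {(X : R⟦X⟧) ^ s}

variable (R) in
noncomputable abbrev toTrunc (s : ℕ) : R⟦X⟧ →+* TruncPowerSeries R s :=
  Ideal.Quotient.mk _

variable (R r) in
noncomputable abbrev epsilon : TruncPowerSeries R (r + 1) :=
  toTrunc R (r + 1) (X ^ r)

theorem toTrunc_eq_zero_iff {s : ℕ} {f : R⟦X⟧} : toTrunc R s f = 0 ↔ X ^ s ∣ f := by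
  rw [Ideal.Quotient.eq_zero_iff_mem, Ideal.mem_span_singleton]

theorem epsilon_mul_self (hr : r ≠ 0) : epsilon R r * epsilon R r = 0 := by
  rw [← map_mul, toTrunc_eq_zero_iff, ← pow_add]
  exact pow_dvd_pow _ (by omega)

theorem epsilon_mul_toTrunc_eq_zero {f : R⟦X⟧} (h : X ∣ f) :
    epsilon R r * toTrunc R (r + 1) f = 0 := by
  rw [← map_mul, toTrunc_eq_zero_iff, pow_succ]
  exact mul_dvd_mul_left _ h

theorem toTrunc_eq_epsilon_mul {f : R⟦X⟧} (h : X ^ r ∣ f) :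
    toTrunc R (r + 1) f = epsilon R r * algebraMap R _ (coeff r f) := by
  rw [← Ideal.Quotient.mk_algebraMap, ← map_mul, Ideal.Quotient.mk_eq_mk_iff_sub_mem,
    Ideal.mem_span_singleton, mul_comm]
  exact X_pow_succ_dvd_sub_C_mul_X_pow h

variable {ι : Type*} [Fintype ι] [DecidableEq ι]

theorem map_toTrunc_eq_one_add_smul {M : Matrix ι ι R⟦X⟧}
    (h : ∀ i j, X ^ r ∣ (M - 1) i j) :
    M.map (toTrunc R (r + 1))
      = 1 + epsilon R r • ((M - 1).map (coeff r)).map (algebraMap R _) := by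
  have hsub : (M - 1).map (toTrunc R (r + 1))
      = epsilon R r • ((M - 1).map (coeff r)).map (algebraMap R _) := by
    ext i j
    exact toTrunc_eq_epsilon_mul (h i j)
  rw [← hsub, ← RingHom.mapMatrix_apply, ← RingHom.mapMatrix_apply, map_sub, map_one,
    add_sub_cancel]

theorem trace_map_coeff_sub_one_eq_zero (hr : r ≠ 0) {M : Matrix ι ι R⟦X⟧}
    (h : ∀ i j, X ^ r ∣ (M - 1) i j) (hdet : M.det = 1) :
    ((M - 1).map (coeff r)).trace = 0 := by
  have hdet' := congrArg (toTrunc R (r + 1)) hdet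
  rw [RingHom.map_det, RingHom.mapMatrix_apply, map_toTrunc_eq_one_add_smul h,
    det_one_add_smul_of_mul_self_eq_zero (epsilon_mul_self hr), map_one, add_eq_left,
    ← AddMonoidHom.map_trace, ← Ideal.Quotient.mk_algebraMap, ← map_mul,
    toTrunc_eq_zero_iff] at hdet'
  exact eq_zero_of_X_pow_succ_dvd_C_mul_X_pow hdet'

theorem epsilon_smul_map_toTrunc_sub_one_eq_zero {W : Matrix ι ι R⟦X⟧}
    (h : ∀ i j, X ∣ (W - 1) i j) : epsilon R r • (W.map (toTrunc R (r + 1)) - 1) = 0 := by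
  rw [← RingHom.mapMatrix_apply, ← map_one (toTrunc R (r + 1)).mapMatrix, ← map_sub]
  ext i j
  exact epsilon_mul_toTrunc_eq_zero (h i j)

end PowerSeries

noncomputable abbrev reduceSL (n s : ℕ) :
    SLQ n →* Matrix.SpecialLinearGroup (Fin n) (TruncPowerSeries ℚ s) :=
  Matrix.SpecialLinearGroup.map (toTrunc ℚ s)

section Congruence

variable {n : ℕ}

theorem mem_Ur_iff {s : ℕ} {Z : SLQ n} :
    Z ∈ Ur n s ↔ ∀ i j, X ^ s ∣ ((Z : Matrix (Fin n) (Fin n) ℚ⟦X⟧) - 1) i j := by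
  simp only [Ur, Matrix.SpecialLinearGroup.mem_ker_map_iff]
  exact forall₂_congr fun _ _ => toTrunc_eq_zero_iff

theorem mem_UU_iff {Z : SLQ n} :
    Z ∈ UU n ↔ ∀ i j, X ∣ ((Z : Matrix (Fin n) (Fin n) ℚ⟦X⟧) - 1) i j := by
  simp only [UU, Matrix.SpecialLinearGroup.mem_ker_map_iff, X_dvd_iff]

theorem UU_le_Ur_one : UU n ≤ Ur n 1 := fun _ hZ => by
  simpa [mem_Ur_iff] using mem_UU_iff.1 hZ

theorem Ur_succ_le (r : ℕ) : Ur n (r + 1) ≤ Ur n r := fun _ hZ => by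
  rw [mem_Ur_iff] at hZ ⊢
  exact fun i j => (pow_dvd_pow X r.le_succ).trans (hZ i j)

theorem incl_mem_UU {Y : SLZt n} (hY : Y ∈ Kker n) : incl n Y ∈ UU n := by
  rw [Kker, Matrix.SpecialLinearGroup.mem_ker_map_iff] at hY
  rw [UU, Matrix.SpecialLinearGroup.mem_ker_map_iff]
  intro i j
  rw [incl, Matrix.SpecialLinearGroup.coe_map_sub_one, map_apply, Polynomial.coe_eval₂RingHom,
    constantCoeff_eval₂_X, ← Polynomial.coe_evalRingHom, hY i j, Int.cast_zero]

theorem exists_mem_Kker_reduceSL_incl_eq_of_mul_self_eq_zero {r : ℕ} (hr : r ≠ 0)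
    {N : Matrix (Fin n) (Fin n) ℤ} (hN : N * N = 0) :
    ∃ Y ∈ Kker n, (reduceSL n (r + 1) (incl n Y) : Matrix _ _ (TruncPowerSeries ℚ (r + 1)))
      = 1 + epsilon ℚ r • N.map (↑) := by
  set M : Matrix (Fin n) (Fin n) (Polynomial ℤ) :=
    (Polynomial.X ^ r : Polynomial ℤ) • N.map Polynomial.C
  have hM : M * M = 0 := by
    rw [Matrix.smul_mul, Matrix.mul_smul, ← RingHom.mapMatrix_apply, ← map_mul, hN, map_zero,
      smul_zero, smul_zero]
  have h0 : M.map (Polynomial.eval 0) = 0 := by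
    ext i j
    simp [M, hr]
  obtain ⟨Y, hY⟩ : ∃ Y : SLZt n, (Y : Matrix (Fin n) (Fin n) (Polynomial ℤ)) = 1 + M :=
    ⟨⟨1 + M, Polynomial.det_one_add_eq_one_of_mul_self_eq_zero hM h0⟩, rfl⟩
  refine ⟨Y, ?_, ?_⟩
  · rw [Kker, Matrix.SpecialLinearGroup.mem_ker_map_iff, hY, add_sub_cancel_left]
    exact fun i j => congrFun (congrFun h0 i) j
  · set ψ := (toTrunc ℚ (r + 1)).comp (Polynomial.eval₂RingHom (Int.castRingHom ℚ⟦X⟧) X)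
    have hψ : M.map ψ = epsilon ℚ r • N.map (↑) := by
      ext i j
      simp only [M, ψ, map_apply, Matrix.smul_apply, smul_eq_mul, map_mul, map_pow,
        RingHom.comp_apply, Polynomial.coe_eval₂RingHom, Polynomial.eval₂_X, eq_intCast,
        map_intCast, epsilon]
    change ψ.mapMatrix (Y : Matrix (Fin n) (Fin n) (Polynomial ℤ)) = _
    rw [hY, map_add, map_one, RingHom.mapMatrix_apply, hψ]

theorem exists_mem_Kker_reduceSL_incl_eq_of_trace_eq_zero {r : ℕ} (hr : r ≠ 0)
    {B : Matrix (Fin n) (Fin n) ℤ} (hB : B.trace = 0) :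
    ∃ Y ∈ Kker n, (reduceSL n (r + 1) (incl n Y) : Matrix _ _ (TruncPowerSeries ℚ (r + 1)))
      = 1 + epsilon ℚ r • B.map (↑) := by
  replace hB := mem_closure_mul_self_eq_zero_of_trace_eq_zero hB
  induction hB using AddSubmonoid.closure_induction with
  | mem N hN => exact exists_mem_Kker_reduceSL_incl_eq_of_mul_self_eq_zero hr hN
  | zero => exact ⟨1, one_mem _, by simp⟩
  | add B₁ B₂ _ _ h₁ h₂ =>
    obtain ⟨Y₁, hY₁, e₁⟩ := h₁
    obtain ⟨Y₂, hY₂, e₂⟩ := h₂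
    refine ⟨Y₁ * Y₂, mul_mem hY₁ hY₂, ?_⟩
    rw [map_mul, map_mul, Matrix.SpecialLinearGroup.coe_mul, e₁, e₂,
      one_add_smul_mul_one_add_smul_s12 (epsilon_mul_self hr), Matrix.map_add _ Int.cast_add]

theorem exists_pow_reduceSL_eq_reduceSL_incl {r : ℕ} (hr : r ≠ 0) {Z : SLQ n}
    (hZ : Z ∈ Ur n r) :
    ∃ d : ℕ, d ≠ 0 ∧ ∃ Y ∈ Kker n,
      reduceSL n (r + 1) (Z ^ d) = reduceSL n (r + 1) (incl n Y) := by
  rw [mem_Ur_iff] at hZ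
  set A := ((Z : Matrix (Fin n) (Fin n) ℚ⟦X⟧) - 1).map (coeff r)
  obtain ⟨d, hd, B, hB⟩ := A.exists_nat_smul_eq_map_intCast
  have hBtr : B.trace = 0 := by
    have h := congrArg trace hB
    rw [trace_smul, trace_map_coeff_sub_one_eq_zero hr hZ Z.det_coe, smul_zero] at h
    have : ((B.trace : ℤ) : ℚ) = 0 := by
      rw [← h]
      simp [trace]
    exact_mod_cast this
  obtain ⟨Y, hY, hYred⟩ := exists_mem_Kker_reduceSL_incl_eq_of_trace_eq_zero hr hBtr
  have hcast : B.map (Int.cast : ℤ → TruncPowerSeries ℚ (r + 1))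
      = (B.map (Int.cast : ℤ → ℚ)).map (algebraMap ℚ _) := by
    ext
    simp
  refine ⟨d, hd, Y, hY, Subtype.ext ?_⟩
  rw [hYred, map_pow, Matrix.SpecialLinearGroup.coe_pow, Matrix.SpecialLinearGroup.map_apply_coe,
    RingHom.mapMatrix_apply, map_toTrunc_eq_one_add_smul hZ,
    one_add_smul_pow (epsilon_mul_self hr), hcast, hB, Matrix.map_smul _ _ (map_nsmul _ _)]

theorem commute_reduceSL_of_mem_UU_of_mem_Ur {r : ℕ} {W Z : SLQ n} (hW : W ∈ UU n)
    (hZ : Z ∈ Ur n r) : Commute (reduceSL n (r + 1) W) (reduceSL n (r + 1) Z) := by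
  rw [mem_UU_iff] at hW
  rw [mem_Ur_iff] at hZ
  have hε := epsilon_smul_map_toTrunc_sub_one_eq_zero (r := r) hW
  have h := commute_one_add_smul hε
    ((((Z : Matrix (Fin n) (Fin n) ℚ⟦X⟧) - 1).map (coeff r)).map
      (algebraMap ℚ (TruncPowerSeries ℚ (r + 1))))
  rw [← map_toTrunc_eq_one_add_smul hZ] at h
  exact Subtype.ext h.eq

theorem exists_zpow_mul_inv_incl_mem_Ur {X : SLQ n} (hX : X ∈ UU n) {r : ℕ} (hr : 1 ≤ r) :
    ∃ m : ℤ, m ≠ 0 ∧ ∃ Y ∈ Kker n, X ^ m * (incl n Y)⁻¹ ∈ Ur n r := by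
  induction r, hr using Nat.le_induction with
  | base => exact ⟨1, one_ne_zero, 1, one_mem _, by simpa using UU_le_Ur_one hX⟩
  | succ r hr ih =>
    obtain ⟨m, hm, Y₀, hY₀, hZ⟩ := ih
    set Z := X ^ m * (incl n Y₀)⁻¹
    have hXm : X ^ m = Z * incl n Y₀ := by simp [Z]
    obtain ⟨d, hd, Y₁, hY₁, hZd⟩ := exists_pow_reduceSL_eq_reduceSL_incl (by omega) hZ
    have hcomm := commute_reduceSL_of_mem_UU_of_mem_Ur (incl_mem_UU hY₀) hZ
    refine ⟨m * d, mul_ne_zero hm (by exact_mod_cast hd), Y₁ * Y₀ ^ d,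
      mul_mem hY₁ (pow_mem hY₀ d), ?_⟩
    change reduceSL n (r + 1) _ = 1
    rw [map_mul_inv, mul_inv_eq_one]
    calc reduceSL n (r + 1) (X ^ (m * d))
        = (reduceSL n (r + 1) Z * reduceSL n (r + 1) (incl n Y₀)) ^ d := by
          rw [_root_.zpow_mul, hXm, zpow_natCast, map_pow, map_mul]
      _ = reduceSL n (r + 1) (incl n Y₁) * reduceSL n (r + 1) (incl n Y₀) ^ d := by
          rw [hcomm.symm.mul_pow, ← map_pow, hZd]
      _ = reduceSL n (r + 1) (incl n (Y₁ * Y₀ ^ d)) := by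
          rw [map_mul, map_mul, map_pow, map_pow]

end Congruence

/-- Every element of `𝒰/𝒰^r` has a nonzero power lying in the image of
`K/K^r → 𝒰/𝒰^r`. -/
theorem stmt12 (n r : ℕ) (X : SLQ n) (hX : X ∈ UU n) :
    ∃ m : ℤ, m ≠ 0 ∧ ∃ Y ∈ Kker n, X ^ m * (incl n Y)⁻¹ ∈ Ur n r := by
  obtain ⟨m, hm, Y, hY, h⟩ := exists_zpow_mul_inv_incl_mem_Ur hX r.succ_pos
  exact ⟨m, hm, Y, hY, Ur_succ_le r h⟩
end

section
/- For n ≥ 3, the lower central series of K̄ = ker(SL_n(ℤ[[T]]) → SL_n(ℤ)) coincides with its T-adic congruence filtration: Γ^r K̄ = K̄^r = {X ∈ K̄ : X ≡ I mod T^r} for all r ≥ 1. -/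
/-!
Write `K̄^m` for the congruence subgroups. For `x = 1 + T^a P` and `y = 1 + T^b Q` one has
`⁅x, y⁆ = 1 + T^(a+b) (PQ - QP) x⁻¹y⁻¹`, so `⁅K̄^a, K̄^b⁆ ≤ K̄^(a+b)`, and on leading coefficients
the group commutator induces the matrix commutator of `sl_n(ℤ)`. For `n ≥ 3` every trace-zero
integer matrix is a sum of brackets `[E_pt, c E_tq]` and `[E_po, c E_op]` whose left entries come
from a fixed finite list. Hence every element of `K̄^(s+1)` is, modulo `K̄^(s+2)`, a product
`∏ ⁅a_i, w_i⁆` with fixed `a_i ∈ K̄^1` and `w_i ∈ K̄^s`. Correcting only the second entries level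
by level, they converge `T`-adically, and completeness of `K̄` gives `K̄^(r+1) = ⁅K̄^1, K̄^r⁆`;
by induction this is the lower central series.
-/

abbrev SLZT (n : ℕ) := Matrix.SpecialLinearGroup (Fin n) (PowerSeries ℤ)

/-- `K̄ = ker(SL_n(ℤ[[T]]) → SL_n(ℤ))`, evaluation at `T = 0`. -/
noncomputable def Kbar (n : ℕ) : Subgroup (SLZT n) :=
  (Matrix.SpecialLinearGroup.map (PowerSeries.constantCoeff (R := ℤ))).ker

/-- `K̄^r = {X : X ≡ I mod T^r}`, the kernel of reduction mod `T^r`. -/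
noncomputable def KbarCong (n r : ℕ) : Subgroup (SLZT n) :=
  (Matrix.SpecialLinearGroup.map
    (Ideal.Quotient.mk (Ideal.span {(PowerSeries.X : PowerSeries ℤ) ^ r}))).ker

open scoped commutatorElement

section FilteredGroup

variable {G ι : Type*} [Group G]

structure IsStronglyCentralFiltration (F : ℕ → Subgroup G) : Prop where
  antitone : Antitone F
  commutator_le : ∀ i j, ⁅F i, F j⁆ ≤ F (i + j)

def IsCompleteFiltration (F : ℕ → Subgroup G) : Prop :=
  ∀ f : ℕ → G, (∀ k, (f k : G ⧸ F k) = f (k + 1)) → ∃ L : G, ∀ k, (L : G ⧸ F k) = f k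

def commutatorProd (l : List ι) (a b : ι → G) : G :=
  (l.map fun i => ⁅a i, b i⁆).prod

def IsCommutatorProdSurjective (F : ℕ → Subgroup G) (l : List ι) (a : ι → G) (r : ℕ) : Prop :=
  ∀ s, r ≤ s → ∀ y ∈ F (s + 1), ∃ w : ι → G,
    (∀ i, w i ∈ F s) ∧ ((commutatorProd l a w : G) : G ⧸ F (s + 2)) = y

theorem List.prod_map_mul_of_commute {M : Type*} [Monoid M] (l : List ι) {f g : ι → M}
    (h : ∀ i ∈ l, ∀ j ∈ l, Commute (g i) (f j)) :
    (l.map fun i => f i * g i).prod = (l.map f).prod * (l.map g).prod := by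
  induction l with
  | nil => simp
  | cons i l ih =>
    have hg : Commute (g i) (l.map f).prod :=
      Commute.list_prod_right _ _ fun _ hx => by
        obtain ⟨j, hj, rfl⟩ := List.mem_map.mp hx
        exact h i (by simp) j (by simp [hj])
    simp only [List.map_cons, List.prod_cons,
      ih fun i hi j hj => h i (by simp [hi]) j (by simp [hj])]
    rw [mul_assoc, ← mul_assoc (g i), hg.eq, mul_assoc, mul_assoc]

theorem QuotientGroup.mk_eq_mk_of_le {H K : Subgroup G} (hHK : H ≤ K) {x y : G}
    (h : (x : G ⧸ H) = y) : (x : G ⧸ K) = y :=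
  QuotientGroup.eq.mpr (hHK (QuotientGroup.eq.mp h))

theorem QuotientGroup.mk_commutatorElement (N : Subgroup G) [N.Normal] (x y : G) :
    ((⁅x, y⁆ : G) : G ⧸ N) = ⁅(x : G ⧸ N), (y : G ⧸ N)⁆ :=
  map_commutatorElement (QuotientGroup.mk' N) x y

theorem mk_commutatorProd (N : Subgroup G) [N.Normal] (l : List ι) (a b : ι → G) :
    ((commutatorProd l a b : G) : G ⧸ N) =
      (l.map fun i => ⁅(a i : G ⧸ N), (b i : G ⧸ N)⁆).prod := by
  change QuotientGroup.mk' N _ = _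
  simp only [commutatorProd, map_list_prod, List.map_map, Function.comp_def,
    map_commutatorElement, QuotientGroup.mk'_apply]

theorem lowerCentralSeries_eq_of_commutator_eq {F : ℕ → Subgroup G}
    (h : ∀ r, 1 ≤ r → ⁅F r, F 1⁆ = F (r + 1)) (m : ℕ) :
    (F 1).lowerCentralSeries m = F (m + 1) := by
  induction m with
  | zero => rfl
  | succ m ih => rw [Subgroup.lowerCentralSeries_succ, ih, h _ (by omega)]

namespace IsStronglyCentralFiltration

variable {F : ℕ → Subgroup G}

theorem commutator_mem (hF : IsStronglyCentralFiltration F) {i j k : ℕ} (hk : k ≤ i + j)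
    {x y : G} (hx : x ∈ F i) (hy : y ∈ F j) : ⁅x, y⁆ ∈ F k :=
  hF.antitone hk (hF.commutator_le i j (Subgroup.commutator_mem_commutator hx hy))

theorem mk_commutatorProd_mul [∀ k, (F k).Normal] (hF : IsStronglyCentralFiltration F)
    {l : List ι} {a b w : ι → G} {r s : ℕ} (hr : 1 ≤ r)
    (ha : ∀ i, a i ∈ F 1) (hb : ∀ i, b i ∈ F r) (hw : ∀ i, w i ∈ F s) :
    ((commutatorProd l a (b * w) : G) : G ⧸ F (s + 2)) =
      commutatorProd l a b * commutatorProd l a w := by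
  have hcomm : ∀ {x y : G}, ⁅x, y⁆ ∈ F (s + 2) → Commute (x : G ⧸ F (s + 2)) y := fun h =>
    commutatorElement_eq_one_iff_commute.mp <| by
      rw [← QuotientGroup.mk_commutatorElement, QuotientGroup.eq_one_iff]; exact h
  rw [mk_commutatorProd, mk_commutatorProd, mk_commutatorProd, ← List.prod_map_mul_of_commute]
  · refine congrArg List.prod (List.map_congr_left fun i _ => ?_)
    have hsplit : ⁅a i, b i * w i⁆ = ⁅a i, b i⁆ * ⁅a i, w i⁆ * ⁅⁅a i, w i⁆⁻¹, b i⁆ := by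
      simp only [commutatorElement_def]; group
    have hcorr : ((⁅⁅a i, w i⁆⁻¹, b i⁆ : G) : G ⧸ F (s + 2)) = 1 :=
      (QuotientGroup.eq_one_iff _).mpr <| hF.commutator_mem (by omega)
        (inv_mem (hF.commutator_mem le_rfl (ha i) (hw i))) (hb i)
    rw [← QuotientGroup.mk_commutatorElement, Pi.mul_apply, hsplit, QuotientGroup.mk_mul, hcorr,
      mul_one, QuotientGroup.mk_mul, QuotientGroup.mk_commutatorElement,
      QuotientGroup.mk_commutatorElement]
  · intro i _ j _
    simp only [← QuotientGroup.mk_commutatorElement]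
    exact hcomm (hF.commutator_mem (by omega) (hF.commutator_mem le_rfl (ha i) (hw i))
      (hF.commutator_mem le_rfl (ha j) (hb j)))

theorem exists_commutatorProd_refine [∀ k, (F k).Normal] (hF : IsStronglyCentralFiltration F)
    {l : List ι} {a : ι → G} (ha : ∀ i, a i ∈ F 1) {r : ℕ} (hr : 1 ≤ r)
    (hsurj : IsCommutatorProdSurjective F l a r) {x : G} {s : ℕ} (hs : r ≤ s) {b : ι → G}
    (hb : ∀ i, b i ∈ F r) (hbx : ((commutatorProd l a b : G) : G ⧸ F (s + 1)) = x) :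
    ∃ b' : ι → G, (∀ i, b' i ∈ F r) ∧ (∀ i, (b i : G ⧸ F s) = b' i) ∧
      ((commutatorProd l a b' : G) : G ⧸ F (s + 2)) = x := by
  obtain ⟨w, hw, hwx⟩ := hsurj s hs _ (QuotientGroup.eq.mp hbx)
  refine ⟨b * w, fun i => mul_mem (hb i) (hF.antitone hs (hw i)),
    fun i => QuotientGroup.eq.mpr (by simpa using hw i), ?_⟩
  rw [hF.mk_commutatorProd_mul hr ha hb hw, hwx, ← QuotientGroup.mk_mul, mul_inv_cancel_left]

theorem exists_commutatorProd_eq [∀ k, (F k).Normal] (hF : IsStronglyCentralFiltration F)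
    (hsep : ⨅ k, F k = ⊥) (hcompl : IsCompleteFiltration F)
    {l : List ι} {a : ι → G} (ha : ∀ i, a i ∈ F 1) {r : ℕ} (hr : 1 ≤ r)
    (hsurj : IsCommutatorProdSurjective F l a r) {x : G} (hx : x ∈ F (r + 1)) :
    ∃ b : ι → G, (∀ i, b i ∈ F r) ∧ commutatorProd l a b = x := by
  let Approx (k : ℕ) := {b : ι → G //
    (∀ i, b i ∈ F r) ∧ ((commutatorProd l a b : G) : G ⧸ F (r + k + 1)) = x}
  choose next hnext using fun k (b : Approx k) =>
    hF.exists_commutatorProd_refine ha hr hsurj (Nat.le_add_right r k) b.2.1 b.2.2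
  let seq : (k : ℕ) → Approx k := fun k => Nat.rec (motive := Approx)
    ⟨1, fun _ => one_mem _, by
      simpa [commutatorProd] using (QuotientGroup.eq_one_iff x).mpr hx |>.symm⟩
    (fun k b => ⟨next k b, (hnext k b).1, (hnext k b).2.2⟩) k
  have hcauchy : ∀ i k, ((seq k).1 i : G ⧸ F k) = (seq (k + 1)).1 i := fun i k =>
    QuotientGroup.mk_eq_mk_of_le (hF.antitone (Nat.le_add_left k r)) ((hnext k (seq k)).2.1 i)
  choose b hb using fun i => hcompl (fun k => (seq k).1 i) (hcauchy i)
  refine ⟨b, fun i => (QuotientGroup.eq_one_iff _).mp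
    ((hb i r).trans ((QuotientGroup.eq_one_iff _).mpr ((seq r).2.1 i))), ?_⟩
  have hbk : ∀ k, ((commutatorProd l a b : G) : G ⧸ F k) = x := fun k => by
    rw [mk_commutatorProd]
    simp only [hb _ k, ← mk_commutatorProd]
    exact QuotientGroup.mk_eq_mk_of_le (hF.antitone (by omega)) (seq k).2.2
  have hmem : (commutatorProd l a b)⁻¹ * x ∈ ⨅ k, F k :=
    Subgroup.mem_iInf.mpr fun k => QuotientGroup.eq.mp (hbk k)
  rwa [hsep, Subgroup.mem_bot, inv_mul_eq_one] at hmem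

theorem commutator_eq [∀ k, (F k).Normal] (hF : IsStronglyCentralFiltration F)
    (hsep : ⨅ k, F k = ⊥) (hcompl : IsCompleteFiltration F)
    {l : List ι} {a : ι → G} (ha : ∀ i, a i ∈ F 1) {r : ℕ} (hr : 1 ≤ r)
    (hsurj : IsCommutatorProdSurjective F l a r) :
    ⁅F 1, F r⁆ = F (r + 1) := by
  refine le_antisymm ((hF.commutator_le 1 r).trans_eq (by rw [add_comm])) fun x hx => ?_
  obtain ⟨b, hb, rfl⟩ := hF.exists_commutatorProd_eq hsep hcompl ha hr hsurj hx
  refine Subgroup.list_prod_mem _ fun y hy => ?_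
  obtain ⟨i, -, rfl⟩ := List.mem_map.mp hy
  exact Subgroup.commutator_mem_commutator (ha i) (hb i)

end IsStronglyCentralFiltration

end FilteredGroup

theorem Matrix.exists_eq_smul_iff {m m' R : Type*} [CommSemiring R] {d : R} {M : Matrix m m' R} :
    (∃ P, M = d • P) ↔ ∀ i j, d ∣ M i j := by
  refine ⟨fun ⟨P, hP⟩ i j => ⟨P i j, by simp [hP]⟩, fun h => ?_⟩
  choose P hP using h
  exact ⟨Matrix.of P, by ext i j; simp [hP]⟩

theorem PowerSeries.eq_zero_of_forall_X_pow_dvd {R : Type*} [CommSemiring R] {f : PowerSeries R}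
    (h : ∀ m, (PowerSeries.X : PowerSeries R) ^ m ∣ f) : f = 0 := by
  ext d
  exact PowerSeries.X_pow_dvd_iff.mp (h (d + 1)) d d.lt_succ_self

open PowerSeries Matrix
open scoped PowerSeries

theorem PowerSeries.smodEq_span_X_pow_iff {R : Type*} [CommRing R] {a b : R⟦X⟧} {m : ℕ} :
    a ≡ b [SMOD ((Ideal.span {(X : R⟦X⟧)}) ^ m • ⊤ : Submodule R⟦X⟧ R⟦X⟧)] ↔
      (X : R⟦X⟧) ^ m ∣ b - a := by
  rw [SModEq.sub_mem, smul_eq_mul, Ideal.mul_top, Ideal.span_singleton_pow,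
    Ideal.mem_span_singleton, ← dvd_neg, neg_sub]

local notation "T" => (PowerSeries.X : ℤ⟦X⟧)

section CongruenceSubgroups

variable {n : ℕ}

local notation "𝕄" => Matrix (Fin n) (Fin n) ℤ⟦X⟧

instance (m : ℕ) : (KbarCong n m).Normal := MonoidHom.normal_ker _

theorem mk_eq_mk_KbarCong_iff_dvd {m : ℕ} {x y : SLZT n} :
    (x : SLZT n ⧸ KbarCong n m) = y ↔ ∀ i j, T ^ m ∣ ((y : 𝕄) - x) i j := by
  rw [QuotientGroup.eq, KbarCong, ← MonoidHom.eq_iff, Matrix.SpecialLinearGroup.ext_iff]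
  simp only [Matrix.SpecialLinearGroup.map_apply_coe, RingHom.mapMatrix_apply, Matrix.map_apply,
    Ideal.Quotient.mk_eq_mk_iff_sub_mem, Ideal.mem_span_singleton]
  rfl

theorem mk_eq_mk_KbarCong_iff {m : ℕ} {x y : SLZT n} :
    (x : SLZT n ⧸ KbarCong n m) = y ↔ ∃ P : 𝕄, (y : 𝕄) = x + T ^ m • P := by
  rw [mk_eq_mk_KbarCong_iff_dvd, ← Matrix.exists_eq_smul_iff]
  simp_rw [sub_eq_iff_eq_add']

theorem mem_KbarCong_iff {m : ℕ} {x : SLZT n} :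
    x ∈ KbarCong n m ↔ ∃ P : 𝕄, (x : 𝕄) = 1 + T ^ m • P := by
  rw [← QuotientGroup.eq_one_iff, eq_comm, ← QuotientGroup.mk_one, mk_eq_mk_KbarCong_iff]
  simp

theorem mem_Kbar_iff {x : SLZT n} : x ∈ Kbar n ↔ (x : 𝕄).map constantCoeff = 1 := by
  rw [Kbar, MonoidHom.mem_ker, Matrix.SpecialLinearGroup.ext_iff]
  exact Matrix.ext_iff

theorem KbarCong_one : KbarCong n 1 = Kbar n := by
  ext x
  rw [mem_KbarCong_iff, mem_Kbar_iff, pow_one]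
  simp_rw [← sub_eq_iff_eq_add', Matrix.exists_eq_smul_iff, X_dvd_iff]
  rw [← Matrix.ext_iff]
  refine forall₂_congr fun i j => ?_
  rw [Matrix.sub_apply, map_sub, sub_eq_zero, Matrix.map_apply, Matrix.one_apply, Matrix.one_apply]
  split_ifs <;> simp

theorem KbarCong_antitone : Antitone (KbarCong n) := fun m k hmk x hx => by
  obtain ⟨P, hP⟩ := mem_KbarCong_iff.mp hx
  exact mem_KbarCong_iff.mpr
    ⟨T ^ (k - m) • P, by rw [hP, smul_smul, ← pow_add, Nat.add_sub_cancel' hmk]⟩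

theorem coe_commutator_eq {a b : ℕ} {x y : SLZT n} {P Q : 𝕄}
    (hx : (x : 𝕄) = 1 + T ^ a • P) (hy : (y : 𝕄) = 1 + T ^ b • Q) :
    ((⁅x, y⁆ : SLZT n) : 𝕄) = 1 + T ^ (a + b) • ((P * Q - Q * P) * ((x⁻¹ * y⁻¹ : SLZT n) : 𝕄)) := by
  have hxy : ((x * y : SLZT n) : 𝕄) = ↑(y * x) + T ^ (a + b) • (P * Q - Q * P) := by
    simp only [Matrix.SpecialLinearGroup.coe_mul, hx, hy, add_mul, mul_add, one_mul, mul_one,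
      smul_mul_smul_comm, smul_sub, pow_add, mul_comm (T ^ b)]
    abel
  rw [commutatorElement_def, mul_assoc (x * y), Matrix.SpecialLinearGroup.coe_mul, hxy, add_mul,
    ← Matrix.SpecialLinearGroup.coe_mul, smul_mul_assoc]
  simp [mul_assoc]

theorem commutator_mem_KbarCong {a b : ℕ} {x y : SLZT n} (hx : x ∈ KbarCong n a)
    (hy : y ∈ KbarCong n b) : ⁅x, y⁆ ∈ KbarCong n (a + b) := by
  obtain ⟨P, hP⟩ := mem_KbarCong_iff.mp hx
  obtain ⟨Q, hQ⟩ := mem_KbarCong_iff.mp hy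
  exact mem_KbarCong_iff.mpr ⟨_, coe_commutator_eq hP hQ⟩

theorem isStronglyCentralFiltration_KbarCong : IsStronglyCentralFiltration (KbarCong n) :=
  ⟨KbarCong_antitone, fun _ _ => Subgroup.commutator_le.mpr fun _ hx _ hy =>
    commutator_mem_KbarCong hx hy⟩

theorem iInf_KbarCong : ⨅ m, KbarCong n m = ⊥ := by
  refine (Subgroup.eq_bot_iff_forall _).mpr fun x hx => ?_
  have hdvd : ∀ m i j, T ^ m ∣ ((x : 𝕄) - 1) i j := fun m =>
    mk_eq_mk_KbarCong_iff_dvd.mp ((QuotientGroup.eq_one_iff x).mpr (Subgroup.mem_iInf.mp hx m)).symm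
  exact Matrix.SpecialLinearGroup.ext _ _ fun i j =>
    sub_eq_zero.mp (eq_zero_of_forall_X_pow_dvd fun m => hdvd m i j)

theorem isCompleteFiltration_KbarCong : IsCompleteFiltration (KbarCong n) := by
  intro f hf
  simp_rw [mk_eq_mk_KbarCong_iff_dvd] at hf ⊢
  have hcauchy : ∀ i j {m k}, m ≤ k → T ^ m ∣ (f k : 𝕄) i j - (f m : 𝕄) i j := by
    intro i j m k hmk
    induction k, hmk using Nat.le_induction with
    | base => simp
    | succ k hmk ih =>
      rw [← sub_add_sub_cancel _ ((f k : 𝕄) i j)]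
      exact dvd_add ((pow_dvd_pow T hmk).trans (hf k i j)) ih
  choose L hL using fun i j => IsPrecomplete.prec (I := Ideal.span {T}) inferInstance
    (f := fun k => (f k : 𝕄) i j) fun hmk => smodEq_span_X_pow_iff.mpr (hcauchy i j hmk)
  simp_rw [smodEq_span_X_pow_iff] at hL
  have hdet : (Matrix.of L).det = 1 := by
    refine sub_eq_zero.mp (eq_zero_of_forall_X_pow_dvd fun k => ?_)
    rw [← Ideal.mem_span_singleton, ← Ideal.Quotient.mk_eq_mk_iff_sub_mem, RingHom.map_det,
      ← (f k).2, RingHom.map_det]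
    congr 1
    ext i j
    exact (Ideal.Quotient.mk_eq_mk_iff_sub_mem _ _).mpr (Ideal.mem_span_singleton.mpr (hL i j k))
  exact ⟨⟨Matrix.of L, hdet⟩, fun k i j => dvd_sub_comm.mp (hL i j k)⟩

-- For `x ∈ K̄^m`, the image of `x` in `K̄^m / K̄^(m+1) ≅ sl_n(ℤ)`.
noncomputable def residue (m : ℕ) (x : SLZT n) : Matrix (Fin n) (Fin n) ℤ :=
  ((x : 𝕄) - 1).map (coeff m)

theorem residue_eq {m : ℕ} {x : SLZT n} {P : 𝕄} (hx : (x : 𝕄) = 1 + T ^ m • P) :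
    residue m x = P.map constantCoeff := by
  ext i j
  simp [residue, hx, coeff_X_pow_mul']

theorem residue_mul {m : ℕ} (hm : 1 ≤ m) {x y : SLZT n} (hx : x ∈ KbarCong n m)
    (hy : y ∈ KbarCong n m) : residue m (x * y) = residue m x + residue m y := by
  obtain ⟨P, hP⟩ := mem_KbarCong_iff.mp hx
  obtain ⟨Q, hQ⟩ := mem_KbarCong_iff.mp hy
  have hxy : ((x * y : SLZT n) : 𝕄) = 1 + T ^ m • (P + Q + T ^ m • (P * Q)) := by
    simp only [Matrix.SpecialLinearGroup.coe_mul, hP, hQ, add_mul, mul_add, one_mul, mul_one,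
      smul_mul_smul_comm, smul_add, smul_smul]
    abel
  rw [residue_eq hP, residue_eq hQ, residue_eq hxy]
  ext i j
  simp [show m ≠ 0 by omega]

theorem residue_list_prod {m : ℕ} (hm : 1 ≤ m) {l : List (SLZT n)}
    (hl : ∀ x ∈ l, x ∈ KbarCong n m) : residue m l.prod = (l.map (residue m)).sum := by
  induction l with
  | nil => ext; simp [residue]
  | cons x l ih =>
    rw [List.forall_mem_cons] at hl
    rw [List.prod_cons, residue_mul hm hl.1 (Subgroup.list_prod_mem _ hl.2), ih hl.2,
      List.map_cons, List.sum_cons]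

theorem mem_KbarCong_succ_of_residue_eq_zero {m : ℕ} {x : SLZT n} (hx : x ∈ KbarCong n m)
    (h : residue m x = 0) : x ∈ KbarCong n (m + 1) := by
  obtain ⟨P, hP⟩ := mem_KbarCong_iff.mp hx
  rw [residue_eq hP] at h
  obtain ⟨Q, rfl⟩ := Matrix.exists_eq_smul_iff.mpr fun i j => X_dvd_iff.mpr (congrFun₂ h i j)
  exact mem_KbarCong_iff.mpr ⟨Q, by rw [hP, smul_smul, pow_succ]⟩

theorem trace_residue {m : ℕ} (hm : 1 ≤ m) {x : SLZT n} (hx : x ∈ KbarCong n m) :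
    (residue m x).trace = 0 := by
  obtain ⟨P, hP⟩ := mem_KbarCong_iff.mp hx
  have hdet := x.2
  rw [hP, Matrix.det_one_add_smul] at hdet
  generalize (Polynomial.eval _ _ : ℤ⟦X⟧) = E at hdet
  have htr : P.trace = -(E * T ^ m) := by
    have : T ^ m * (P.trace + E * T ^ m) = 0 := by linear_combination hdet
    linear_combination (mul_eq_zero.mp this).resolve_left (pow_ne_zero _ X_ne_zero)
  rw [residue_eq hP, ← AddMonoidHom.map_trace, htr, map_neg, map_mul, map_pow, constantCoeff_X,
    zero_pow (by omega), mul_zero, neg_zero]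

theorem residue_commutator {a b : ℕ} (ha : 1 ≤ a) (hb : 1 ≤ b) {x y : SLZT n}
    (hx : x ∈ KbarCong n a) (hy : y ∈ KbarCong n b) :
    residue (a + b) ⁅x, y⁆ = residue a x * residue b y - residue b y * residue a x := by
  obtain ⟨P, hP⟩ := mem_KbarCong_iff.mp hx
  obtain ⟨Q, hQ⟩ := mem_KbarCong_iff.mp hy
  have hK : x⁻¹ * y⁻¹ ∈ Kbar n := by
    rw [← KbarCong_one]
    exact mul_mem (inv_mem (KbarCong_antitone ha hx)) (inv_mem (KbarCong_antitone hb hy))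
  rw [residue_eq (coe_commutator_eq hP hQ), residue_eq hP, residue_eq hQ, Matrix.map_mul,
    mem_Kbar_iff.mp hK, mul_one, ← RingHom.mapMatrix_apply, map_sub, map_mul, map_mul]
  rfl

theorem coe_transvection_X_pow_mul {i j : Fin n} (hij : i ≠ j) (m : ℕ) (f : ℤ⟦X⟧) :
    (SpecialLinearGroup.transvection hij (T ^ m * f) : 𝕄) = 1 + T ^ m • single i j f := by
  rw [SpecialLinearGroup.transvection_coe, Matrix.smul_single, smul_eq_mul]

theorem transvection_X_pow_mul_mem {i j : Fin n} (hij : i ≠ j) (m : ℕ) (f : ℤ⟦X⟧) :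
    SpecialLinearGroup.transvection hij (T ^ m * f) ∈ KbarCong n m :=
  mem_KbarCong_iff.mpr ⟨_, coe_transvection_X_pow_mul hij m f⟩

theorem residue_transvection_X_pow_mul {i j : Fin n} (hij : i ≠ j) (m : ℕ) (f : ℤ⟦X⟧) :
    residue m (SpecialLinearGroup.transvection hij (T ^ m * f)) = single i j (constantCoeff f) := by
  rw [residue_eq (coe_transvection_X_pow_mul hij m f), Matrix.map_single]

noncomputable def third (hn : 2 < n) (p q : Fin n) : Fin n :=
  (Fin.exists_ne_and_ne_of_two_lt p q hn).choose

theorem ne_third (hn : 2 < n) (p q : Fin n) : p ≠ third hn p q :=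
  (Fin.exists_ne_and_ne_of_two_lt p q hn).choose_spec.1.symm

theorem third_ne (hn : 2 < n) (p q : Fin n) : third hn p q ≠ q :=
  (Fin.exists_ne_and_ne_of_two_lt p q hn).choose_spec.2

/- The slot `.inl (p, q)` with `p ≠ q` produces the entry `A p q` as `⁅e_pt(T), e_tq(A p q T^s)⁆`
with `t = third hn p q` (the diagonal pairs `.inl (p, p)` produce nothing); the slot `.inr p`
produces `A p p (E_pp - E_oo)`. Together they reach every trace-zero `A`. -/
noncomputable def leftFactor (hn : 2 < n) (o : Fin n) :
    (Fin n × Fin n) ⊕ {p : Fin n // p ≠ o} → SLZT n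
  | .inl (p, q) => SpecialLinearGroup.transvection (ne_third hn p q) T
  | .inr p => SpecialLinearGroup.transvection p.2 T

noncomputable def rightFactor (hn : 2 < n) (o : Fin n) (s : ℕ) (A : Matrix (Fin n) (Fin n) ℤ) :
    (Fin n × Fin n) ⊕ {p : Fin n // p ≠ o} → SLZT n
  | .inl (p, q) => SpecialLinearGroup.transvection (third_ne hn p q)
      (T ^ s * C (if p = q then 0 else A p q))
  | .inr p => SpecialLinearGroup.transvection p.2.symm (T ^ s * C (A p p))

def slotResidue (o : Fin n) (A : Matrix (Fin n) (Fin n) ℤ) :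
    (Fin n × Fin n) ⊕ {p : Fin n // p ≠ o} → Matrix (Fin n) (Fin n) ℤ :=
  Sum.elim (fun pq => single pq.1 pq.2 (if pq.1 = pq.2 then 0 else A pq.1 pq.2))
    fun p => single p.1 p.1 (A p p) - single o o (A p p)

theorem leftFactor_mem (hn : 2 < n) (o : Fin n) (i) : leftFactor hn o i ∈ KbarCong n 1 := by
  rcases i with ⟨p, q⟩ | p <;>
    simpa [leftFactor] using transvection_X_pow_mul_mem _ 1 1

theorem rightFactor_mem (hn : 2 < n) (o : Fin n) (s : ℕ) (A : Matrix (Fin n) (Fin n) ℤ) (i) :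
    rightFactor hn o s A i ∈ KbarCong n s := by
  rcases i with ⟨p, q⟩ | p
  · exact transvection_X_pow_mul_mem (third_ne hn p q) _ _
  · exact transvection_X_pow_mul_mem p.2.symm _ _

theorem commutator_leftFactor_rightFactor_mem (hn : 2 < n) (o : Fin n) (s : ℕ)
    (A : Matrix (Fin n) (Fin n) ℤ) (i) :
    ⁅leftFactor hn o i, rightFactor hn o s A i⁆ ∈ KbarCong n (s + 1) := by
  rw [add_comm]
  exact commutator_mem_KbarCong (leftFactor_mem hn o i) (rightFactor_mem hn o s A i)

theorem residue_commutator_leftFactor_rightFactor (hn : 2 < n) (o : Fin n) {s : ℕ} (hs : 1 ≤ s)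
    (A : Matrix (Fin n) (Fin n) ℤ) (i) :
    residue (s + 1) ⁅leftFactor hn o i, rightFactor hn o s A i⁆ = slotResidue o A i := by
  rw [add_comm, residue_commutator le_rfl hs (leftFactor_mem hn o i) (rightFactor_mem hn o s A i)]
  rcases i with ⟨p, q⟩ | p
  · have hl := residue_transvection_X_pow_mul (ne_third hn p q) 1 1
    simp only [pow_one, mul_one, map_one] at hl
    simp only [leftFactor, rightFactor, slotResidue, hl, residue_transvection_X_pow_mul,
      constantCoeff_C, Sum.elim_inl]
    split_ifs with hpq
    · simp
    · rw [single_mul_single_same, single_mul_single_of_ne _ _ _ _ (Ne.symm hpq), one_mul, sub_zero]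
  · have hl := residue_transvection_X_pow_mul p.2 1 1
    simp only [pow_one, mul_one, map_one] at hl
    simp [leftFactor, rightFactor, slotResidue, hl, residue_transvection_X_pow_mul]

theorem sum_slotResidue (o : Fin n) {A : Matrix (Fin n) (Fin n) ℤ} (hA : A.trace = 0) :
    ∑ i, slotResidue o A i = A := by
  have hdiag : ∑ p : {p // p ≠ o}, (single p.1 p.1 (A p p) - single o o (A p p)) =
      ∑ p, single p p (A p p) := by
    have htr : ∑ p : {p // p ≠ o}, A p p = -A o o := by
      rw [eq_neg_iff_add_eq_zero, add_comm, ← Fintype.sum_eq_add_sum_subtype_ne (fun p => A p p)]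
      exact hA
    have hsingle : ∑ p : {p // p ≠ o}, single o o (A p p) =
        single o o (∑ p : {p // p ≠ o}, A p p) :=
      (map_sum (singleAddMonoidHom (α := ℤ) o o) (fun p : {p // p ≠ o} => A p p) _).symm
    rw [Finset.sum_sub_distrib, hsingle, htr, ← single_neg, sub_neg_eq_add, add_comm,
      ← Fintype.sum_eq_add_sum_subtype_ne (fun p => single p p (A p p))]
  have hrow : ∀ p, ∑ q, single p q (if p = q then 0 else A p q) + single p p (A p p) =
      ∑ q, single p q (A p q) := fun p => by
    rw [Fintype.sum_eq_add_sum_subtype_ne _ p,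
      Fintype.sum_eq_add_sum_subtype_ne (fun q => single p q (A p q)) p, if_pos rfl, single_zero,
      zero_add, add_comm]
    exact congrArg _ (Finset.sum_congr rfl fun q _ => by rw [if_neg (Ne.symm q.2)])
  simp only [slotResidue, Fintype.sum_sum_type, Sum.elim_inl, Sum.elim_inr, hdiag,
    Fintype.sum_prod_type]
  rw [← Finset.sum_add_distrib]
  simp only [hrow]
  exact (matrix_eq_sum_single A).symm

theorem isCommutatorProdSurjective_leftFactor (hn : 2 < n) (o : Fin n) {r : ℕ} (hr : 1 ≤ r) :
    IsCommutatorProdSurjective (KbarCong n) Finset.univ.toList (leftFactor hn o) r := by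
  intro s hs y hy
  set A := residue (s + 1) y
  refine ⟨rightFactor hn o s A, rightFactor_mem hn o s A, ?_⟩
  set c := commutatorProd Finset.univ.toList (leftFactor hn o) (rightFactor hn o s A) with hc_def
  have hmem : ∀ x ∈ Finset.univ.toList.map fun i => ⁅leftFactor hn o i, rightFactor hn o s A i⁆,
      x ∈ KbarCong n (s + 1) := fun x hx => by
    obtain ⟨i, -, rfl⟩ := List.mem_map.mp hx
    exact commutator_leftFactor_rightFactor_mem hn o s A i
  have hc : c ∈ KbarCong n (s + 1) := Subgroup.list_prod_mem _ hmem
  have hres : residue (s + 1) c = A := by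
    rw [hc_def, commutatorProd, residue_list_prod (by omega) hmem, List.map_map,
      Finset.sum_map_toList]
    simp only [Function.comp_apply, residue_commutator_leftFactor_rightFactor hn o (hr.trans hs)]
    exact sum_slotResidue o (trace_residue (by omega) hy)
  have hcy : c⁻¹ * y ∈ KbarCong n (s + 1) := mul_mem (inv_mem hc) hy
  have hsum := residue_mul (by omega) hc hcy
  rw [mul_inv_cancel_left, hres, left_eq_add] at hsum
  exact QuotientGroup.eq.mpr (mem_KbarCong_succ_of_residue_eq_zero hcy hsum)

theorem commutator_KbarCong_KbarCong_one (hn : 2 < n) {r : ℕ} (hr : 1 ≤ r) :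
    ⁅KbarCong n r, KbarCong n 1⁆ = KbarCong n (r + 1) := by
  rw [Subgroup.commutator_comm]
  exact isStronglyCentralFiltration_KbarCong.commutator_eq iInf_KbarCong
    isCompleteFiltration_KbarCong (leftFactor_mem hn ⟨0, by omega⟩) hr
    (isCommutatorProdSurjective_leftFactor hn _ hr)

end CongruenceSubgroups

/-- For `n ≥ 3`, the lower central series of `K̄` coincides with its `T`-adic
congruence filtration: `Γ^r K̄ = K̄^r` for all `r ≥ 1`. -/
theorem stmt14 (n : ℕ) (hn : 3 ≤ n) (r : ℕ) (hr : 1 ≤ r) :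
    (⊤ : Subgroup ↥(Kbar n)).lowerCentralSeries (r - 1) = (KbarCong n r).subgroupOf (Kbar n) := by
  obtain ⟨m, rfl⟩ : ∃ m, r = m + 1 := ⟨r - 1, by omega⟩
  have hle : KbarCong n (m + 1) ≤ Kbar n := KbarCong_one ▸ KbarCong_antitone (by omega)
  apply Subgroup.map_injective (Kbar n).subtype_injective
  rw [Nat.add_sub_cancel, Subgroup.top_subtype_lowerCentralSeries,
    Subgroup.map_subgroupOf_eq_of_le hle, ← KbarCong_one,
    lowerCentralSeries_eq_of_commutator_eq fun r hr => commutator_KbarCong_KbarCong_one hn hr]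
end

section
/- Let G be a group and Ḡ = lim← G/Γ^r G its pronilpotent completion. The map Ḡ → \overline{Ḡ} (the pronilpotent completion of Ḡ) is an isomorphism if and only if for every r ≥ 1 the natural map G/Γ^r G → Ḡ/Γ^r Ḡ is an isomorphism. -/
/-- The pronilpotent completion `Ḡ = lim← G/Γ^{r+1} G`, realized as the subgroup of
compatible families in `Π r, G ⧸ Γ^{r+1} G` (Mathlib's `lowerCentralSeries G r`
is `Γ^{r+1} G`). -/
noncomputable def nilpComp (G : Type*) [Group G] :
    Subgroup (∀ r : ℕ, G ⧸ (⊤ : Subgroup G).lowerCentralSeries r) where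
  carrier := {f | ∀ r : ℕ,
    Subgroup.quotientMapOfLE
      (Subgroup.lowerCentralSeries_antitone (S := (⊤ : Subgroup G)) (Nat.le_succ r)) (f (r + 1)) = f r}
  one_mem' := by
    intro r
    show Subgroup.quotientMapOfLE _ ((1 : G) : G ⧸ _) = _
    rw [Subgroup.quotientMapOfLE_apply_mk]
    rfl
  mul_mem' := by
    intro a b ha hb r
    obtain ⟨x, hx⟩ := QuotientGroup.mk_surjective (a (r + 1))
    obtain ⟨y, hy⟩ := QuotientGroup.mk_surjective (b (r + 1))
    show Subgroup.quotientMapOfLE _ (a (r + 1) * b (r + 1)) = a r * b r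
    rw [← ha r, ← hb r, ← hx, ← hy, ← QuotientGroup.mk_mul,
      Subgroup.quotientMapOfLE_apply_mk, Subgroup.quotientMapOfLE_apply_mk,
      Subgroup.quotientMapOfLE_apply_mk, QuotientGroup.mk_mul]
  inv_mem' := by
    intro a ha r
    obtain ⟨x, hx⟩ := QuotientGroup.mk_surjective (a (r + 1))
    show Subgroup.quotientMapOfLE _ ((a (r + 1))⁻¹) = (a r)⁻¹
    rw [← ha r, ← hx, ← QuotientGroup.mk_inv, Subgroup.quotientMapOfLE_apply_mk,
      Subgroup.quotientMapOfLE_apply_mk, QuotientGroup.mk_inv]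

/-- The canonical homomorphism `G → Ḡ`. -/
noncomputable def nilpHom (G : Type*) [Group G] : G →* ↥(nilpComp G) where
  toFun g := ⟨fun r => (g : G ⧸ (⊤ : Subgroup G).lowerCentralSeries r),
    fun r => Subgroup.quotientMapOfLE_apply_mk _ g⟩
  map_one' := by ext r; rfl
  map_mul' x y := by ext r; rfl

/-!
Write `N` for the completion `Ḡ`. Since `G/Γ^r G` is nilpotent, the projection `N → G/Γ^r G`
factors through `q_r : N/Γ^r N → G/Γ^r G`, a left inverse of the natural map
`G/Γ^r G → N/Γ^r N`; so the natural map is bijective iff `q_r` is injective. Together the `q_r`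
give `collapse : N̄ → N`, a left inverse both of `N → N̄` and of the completion of `G → N`; so
`N → N̄` is bijective iff `collapse` is injective. Finally `collapse` is injective iff all `q_r`
are: if `collapse` is injective, `N → N̄` equals the completion of `G → N`, which says that every
class in `N/Γ^r N` comes from `G/Γ^r G`.
-/

open Function Subgroup

theorem Function.LeftInverse.bijective_iff_injective {α β : Type*} {f : α → β} {g : β → α}
    (h : LeftInverse g f) : Bijective f ↔ Injective g :=
  ⟨fun hf => (h.rightInverse_of_surjective hf.2).injective,
    fun hg => ⟨h.injective, (h.rightInverse_of_injective hg).surjective⟩⟩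

namespace Subgroup

variable {G H : Type*} [Group G] [Group H]

theorem map_top_lowerCentralSeries_of_surjective {f : G →* H} (hf : Surjective f) (n : ℕ) :
    ((⊤ : Subgroup G).lowerCentralSeries n).map f = (⊤ : Subgroup H).lowerCentralSeries n := by
  rw [map_lowerCentralSeries, map_top_of_surjective f hf]

theorem top_lowerCentralSeries_le_comap (f : G →* H) (n : ℕ) :
    (⊤ : Subgroup G).lowerCentralSeries n ≤ ((⊤ : Subgroup H).lowerCentralSeries n).comap f := by
  rw [← map_le_iff_le_comap, map_lowerCentralSeries]
  exact lowerCentralSeries_mono n le_top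

theorem top_lowerCentralSeries_quotient_eq_bot (n : ℕ) :
    (⊤ : Subgroup (G ⧸ (⊤ : Subgroup G).lowerCentralSeries n)).lowerCentralSeries n = ⊥ := by
  rw [← map_top_lowerCentralSeries_of_surjective (QuotientGroup.mk'_surjective _),
    map_eq_bot_iff, QuotientGroup.ker_mk']

theorem top_lowerCentralSeries_le_ker (n : ℕ)
    (f : H →* G ⧸ (⊤ : Subgroup G).lowerCentralSeries n) :
    (⊤ : Subgroup H).lowerCentralSeries n ≤ f.ker := by
  rw [← MonoidHom.comap_bot, ← top_lowerCentralSeries_quotient_eq_bot n]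
  exact top_lowerCentralSeries_le_comap f n

end Subgroup

section

variable {G H : Type*} [Group G] [Group H]

noncomputable def lcsQuotientMap (f : G →* H) (n : ℕ) :
    G ⧸ (⊤ : Subgroup G).lowerCentralSeries n →* H ⧸ (⊤ : Subgroup H).lowerCentralSeries n :=
  QuotientGroup.map _ _ f (top_lowerCentralSeries_le_comap f n)

theorem lcsQuotientMap_quotientMapOfLE (f : G →* H) (n : ℕ)
    (x : G ⧸ (⊤ : Subgroup G).lowerCentralSeries (n + 1)) :
    quotientMapOfLE ((⊤ : Subgroup H).lowerCentralSeries_antitone (Nat.le_succ n))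
        (lcsQuotientMap f (n + 1) x) =
      lcsQuotientMap f n
        (quotientMapOfLE ((⊤ : Subgroup G).lowerCentralSeries_antitone (Nat.le_succ n)) x) := by
  induction x using QuotientGroup.induction_on
  rfl

end

namespace nilpComp

variable {G H : Type*} [Group G] [Group H]

variable (G) in
noncomputable def proj (n : ℕ) : nilpComp G →* G ⧸ (⊤ : Subgroup G).lowerCentralSeries n :=
  (Pi.evalMonoidHom _ n).comp (nilpComp G).subtype

variable (G) in
noncomputable def quotientProj (n : ℕ) :
    nilpComp G ⧸ (⊤ : Subgroup (nilpComp G)).lowerCentralSeries n →*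
      G ⧸ (⊤ : Subgroup G).lowerCentralSeries n :=
  QuotientGroup.lift _ (proj G n) (top_lowerCentralSeries_le_ker n _)

theorem quotientProj_leftInverse (n : ℕ) :
    LeftInverse (quotientProj G n) (lcsQuotientMap (nilpHom G) n) := by
  intro x
  induction x using QuotientGroup.induction_on
  rfl

noncomputable def map (f : G →* H) : nilpComp G →* nilpComp H where
  toFun g := ⟨fun n => lcsQuotientMap f n (g.1 n), fun n => by
    rw [lcsQuotientMap_quotientMapOfLE, g.2 n]⟩
  map_one' := by ext n; exact map_one _
  map_mul' x y := by ext n; exact map_mul _ _ _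

variable (G) in
noncomputable def collapse : nilpComp (nilpComp G) →* nilpComp G where
  toFun y := ⟨fun n => quotientProj G n (y.1 n), fun n => by
    dsimp only
    rw [← y.2 n]
    induction y.1 (n + 1) using QuotientGroup.induction_on with
    | H g => exact g.2 n⟩
  map_one' := by ext n; exact map_one _
  map_mul' x y := by ext n; exact map_mul _ _ _

theorem collapse_leftInverse_nilpHom : LeftInverse (collapse G) (nilpHom (nilpComp G)) :=
  fun _ => rfl

theorem collapse_leftInverse_map_nilpHom : LeftInverse (collapse G) (map (nilpHom G)) :=
  fun g => Subtype.ext <| funext fun n => quotientProj_leftInverse n (g.1 n)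

theorem injective_collapse_iff :
    Injective (collapse G) ↔ ∀ n, Injective (quotientProj G n) := by
  constructor
  · intro hinj n x y hxy
    have hν : ∀ g, nilpHom (nilpComp G) g = map (nilpHom G) g := fun g =>
      hinj (by rw [collapse_leftInverse_nilpHom, collapse_leftInverse_map_nilpHom])
    have hmk : ∀ g : nilpComp G,
        (g : nilpComp G ⧸ (⊤ : Subgroup (nilpComp G)).lowerCentralSeries n) =
          lcsQuotientMap (nilpHom G) n (quotientProj G n g) :=
      fun g => congrArg (fun y => y.1 n) (hν g)
    obtain ⟨x, rfl⟩ := QuotientGroup.mk_surjective x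
    obtain ⟨y, rfl⟩ := QuotientGroup.mk_surjective y
    rw [hmk x, hmk y, hxy]
  · intro hinj y z hyz
    exact Subtype.ext <| funext fun n => hinj n (congrArg (fun g => g.1 n) hyz)

end nilpComp

open nilpComp in
/-- Bousfield's Lemma 13.4: for `Ḡ = lim← G/Γ^r G`, the canonical map
`Ḡ → \bar{Ḡ}` is an isomorphism iff each natural map `G/Γ^r G → Ḡ/Γ^r Ḡ`
is an isomorphism. -/
theorem stmt19 (G : Type*) [Group G] :
    Function.Bijective (nilpHom ↥(nilpComp G)) ↔
    ∀ r : ℕ, Function.Bijective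
      (QuotientGroup.map ((⊤ : Subgroup G).lowerCentralSeries r)
        ((⊤ : Subgroup ↥(nilpComp G)).lowerCentralSeries r) (nilpHom G)
        (fun x hx => Subgroup.lowerCentralSeries.map (nilpHom G) r
          (Subgroup.mem_map_of_mem _ hx))) := by
  rw [collapse_leftInverse_nilpHom.bijective_iff_injective, injective_collapse_iff]
  exact forall_congr' fun n => (quotientProj_leftInverse n).bijective_iff_injective.symm
end
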